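/- arXiv:1212.3779 — 4 statements merged into one kernel-verified Lean document; each statement's English description precedes it below -/
import Mathlib

section
/- Let f:(0,1)→ℝ, q∈[1,∞], and g∈L^q(0,1) nonnegative satisfy |f(s)−f(t)| ≤ |∫_s^t g(r) dr| for Lebesgue-almost every pair (s,t)∈(0,1)². Then f belongs to W^{1,q}(0,1) (i.e., f has an absolutely continuous representative with derivative in L^q) and |f'| ≤ g almost everywhere in (0,1). -/
open MeasureTheory Set
open scoped ENNReal NNReal

/- **Statement 0.** If `f : (0,1) → ℝ` and a nonnegative `g ∈ L^q(0,1)` satisfy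
`|f(s) - f(t)| ≤ |∫_s^t g|` for a.e. pair `(s,t)`, then `f ∈ W^{1,q}(0,1)`:
it has a representative `F` which is an indefinite integral of some `f' ∈ L^q`
with `|f'| ≤ g` a.e. -/
theorem stmt0 (f : ℝ → ℝ) (q : ℝ≥0∞) (hq : 1 ≤ q) (g : ℝ → ℝ)
    (hg0 : ∀ t, 0 ≤ g t)
    (hgq : MemLp g q (volume.restrict (Ioo (0:ℝ) 1)))
    (hineq : ∀ᵐ st : ℝ × ℝ
        ∂((volume.restrict (Ioo (0:ℝ) 1)).prod (volume.restrict (Ioo (0:ℝ) 1))),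
      |f st.1 - f st.2| ≤ |∫ r in st.2..st.1, g r|) :
    ∃ F f' : ℝ → ℝ,
      (∀ᵐ t ∂(volume.restrict (Ioo (0:ℝ) 1)), F t = f t) ∧
      (∀ s ∈ Ioo (0:ℝ) 1, ∀ t ∈ Ioo (0:ℝ) 1, s ≤ t →
        F t - F s = ∫ r in s..t, f' r) ∧
      MemLp f' q (volume.restrict (Ioo (0:ℝ) 1)) ∧
      (∀ᵐ t ∂(volume.restrict (Ioo (0:ℝ) 1)), |f' t| ≤ g t) := by
  have hIm : MeasurableSet (Ioo (0:ℝ) 1) := measurableSet_Ioo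
  haveI : Fact (volume (Ioo (0:ℝ) 1) < ∞) := ⟨by simp⟩
  -- the truncated function g₀
  set g₀ : ℝ → ℝ := (Ioo (0:ℝ) 1).indicator g with hg₀def
  have hg₀0 : ∀ t, 0 ≤ g₀ t := fun t => Set.indicator_nonneg (fun x _ => hg0 x) t
  have hgint : IntegrableOn g (Ioo (0:ℝ) 1) volume := by
    have := hgq.mono_exponent hq
    exact (memLp_one_iff_integrable.mp this)
  have hg₀int : Integrable g₀ volume := (integrable_indicator_iff hIm).mpr hgint
  -- the primitive G
  set G : ℝ → ℝ := fun t => ∫ r in (0:ℝ)..t, g₀ r with hGdef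
  have hGcont : Continuous G := hg₀int.continuous_primitive 0
  have hGsub : ∀ a b : ℝ, G b - G a = ∫ r in a..b, g₀ r := by
    intro a b
    have h := intervalIntegral.integral_add_adjacent_intervals
      (hg₀int.intervalIntegrable (a := 0) (b := a))
      (hg₀int.intervalIntegrable (a := a) (b := b))
    simp only [hGdef]
    linarith
  have hGmono : Monotone G := by
    intro a b hab
    have h := hGsub a b
    have h2 : 0 ≤ ∫ r in a..b, g₀ r :=
      intervalIntegral.integral_nonneg hab (fun x _ => hg₀0 x)
    linarith
  -- interval integrals of g inside (0,1) are increments of G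
  have hgG : ∀ s ∈ Ioo (0:ℝ) 1, ∀ t ∈ Ioo (0:ℝ) 1, (∫ r in t..s, g r) = G s - G t := by
    intro s hs t ht
    have hsub : uIcc t s ⊆ Ioo (0:ℝ) 1 := (Set.ordConnected_Ioo).uIcc_subset ht hs
    have hcg : (∫ r in t..s, g r) = ∫ r in t..s, g₀ r := by
      refine intervalIntegral.integral_congr (fun x hx => ?_)
      exact (Set.indicator_of_mem (hsub hx) g).symm
    rw [hcg, ← hGsub t s]
  -- a.e. slices
  have hae : ∀ᵐ s ∂(volume.restrict (Ioo (0:ℝ) 1)),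
      ∀ᵐ t ∂(volume.restrict (Ioo (0:ℝ) 1)), |f s - f t| ≤ |∫ r in t..s, g r| :=
    MeasureTheory.Measure.ae_ae_of_ae_prod hineq
  set S : Set ℝ := Ioo (0:ℝ) 1 ∩
    {s | ∀ᵐ t ∂(volume.restrict (Ioo (0:ℝ) 1)), |f s - f t| ≤ |∫ r in t..s, g r|} with hSdef
  have hS_ae : ∀ᵐ s ∂(volume.restrict (Ioo (0:ℝ) 1)), s ∈ S := by
    filter_upwards [hae, ae_restrict_mem hIm] with s h1 h2
    exact ⟨h2, h1⟩
  -- key pairwise bound on S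
  have key : ∀ s ∈ S, ∀ t ∈ S, |f s - f t| ≤ |G s - G t| := by
    intro s hs t ht
    by_contra hcon
    push_neg at hcon
    set c := |f s - f t| with hc
    have hΦcont : Continuous fun r => |G s - G r| + |G t - G r| := by
      fun_prop
    have hopen : IsOpen ({r | |G s - G r| + |G t - G r| < c} ∩ Ioo (0:ℝ) 1) :=
      (isOpen_lt hΦcont continuous_const).inter isOpen_Ioo
    have htmem : t ∈ {r | |G s - G r| + |G t - G r| < c} ∩ Ioo (0:ℝ) 1 := by
      refine ⟨?_, ht.1⟩
      simp only [mem_setOf_eq, sub_self, abs_zero, add_zero]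
      exact hcon
    have hae2 : ∀ᵐ r ∂(volume.restrict (Ioo (0:ℝ) 1)),
        c ≤ |G s - G r| + |G t - G r| := by
      filter_upwards [hs.2, ht.2, ae_restrict_mem hIm] with r h1 h2 hr
      have e1 : |f s - f r| ≤ |G s - G r| := by
        rw [hgG s hs.1 r hr] at h1; exact h1
      have e2 : |f t - f r| ≤ |G t - G r| := by
        rw [hgG t ht.1 r hr] at h2; exact h2
      calc c ≤ |f s - f r| + |f r - f t| := abs_sub_le (f s) (f r) (f t)
        _ = |f s - f r| + |f t - f r| := by rw [abs_sub_comm (f r) (f t)]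
        _ ≤ |G s - G r| + |G t - G r| := add_le_add e1 e2
    have h0 : volume.restrict (Ioo (0:ℝ) 1) {r | |G s - G r| + |G t - G r| < c} = 0 := by
      have := hae2
      rw [ae_iff] at this
      simpa only [not_le] using this
    have hzero : volume ({r | |G s - G r| + |G t - G r| < c} ∩ Ioo (0:ℝ) 1) = 0 := by
      rw [← Measure.restrict_apply' hIm]
      exact h0
    have hpos : 0 < volume ({r | |G s - G r| + |G t - G r| < c} ∩ Ioo (0:ℝ) 1) :=
      hopen.measure_pos volume ⟨t, htmem⟩
    exact absurd hzero (ne_of_gt hpos)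
  -- S is nonempty
  haveI : (ae (volume.restrict (Ioo (0:ℝ) 1))).NeBot := by
    refine ae_neBot.mpr ?_
    simp [Measure.restrict_eq_zero]
  obtain ⟨s₀, hs₀⟩ := hS_ae.exists
  -- the partial function on G '' S and its Lipschitz extension
  set φ : ℝ → ℝ := fun x => sInf (f '' (S ∩ G ⁻¹' {x})) with hφdef
  have hφval : ∀ s ∈ S, φ (G s) = f s := by
    intro s hs
    have himg : f '' (S ∩ G ⁻¹' {G s}) = {f s} := by
      apply Set.eq_singleton_iff_nonempty_unique_mem.mpr
      refine ⟨⟨f s, ⟨s, ⟨hs, rfl⟩, rfl⟩⟩, ?_⟩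
      rintro y ⟨s', ⟨hs', hGs'⟩, rfl⟩
      have h1 : |f s' - f s| ≤ |G s' - G s| := key s' hs' s hs
      have h2 : G s' = G s := hGs'
      rw [h2, sub_self, abs_zero] at h1
      have := abs_nonneg (f s' - f s)
      have h3 : f s' - f s = 0 := by
        rw [← abs_eq_zero]; linarith
      linarith
    rw [hφdef]
    simp only [himg, csInf_singleton]
  have hφlip : LipschitzOnWith 1 φ (G '' S) := by
    rw [lipschitzOnWith_iff_dist_le_mul]
    rintro x ⟨s, hs, rfl⟩ y ⟨t, ht, rfl⟩
    rw [hφval s hs, hφval t ht, Real.dist_eq, Real.dist_eq]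
    simpa using key s hs t ht
  obtain ⟨h, hlip, heq⟩ := hφlip.extend_real
  set F : ℝ → ℝ := fun t => h (G t) with hFdef
  have hFf : ∀ s ∈ S, F s = f s := by
    intro s hs
    rw [hFdef]
    simp only
    rw [← heq (mem_image_of_mem G hs), hφval s hs]
  have hFlip : ∀ a b : ℝ, |F a - F b| ≤ |G a - G b| := by
    intro a b
    have := hlip.dist_le_mul (G a) (G b)
    simpa [Real.dist_eq] using this
  have hFcont : Continuous F := hlip.continuous.comp hGcont
  -- the two monotone functions
  have hM1mono : Monotone (fun t => G t + F t) := by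
    intro a b hab
    have h1 := hFlip b a
    have h2 : G a ≤ G b := hGmono hab
    rw [abs_le] at h1
    have := h1.1
    have h3 : |G b - G a| = G b - G a := abs_of_nonneg (by linarith)
    rw [h3] at h1
    simp only
    linarith [h1.1]
  have hM2mono : Monotone (fun t => G t - F t) := by
    intro a b hab
    have h1 := hFlip b a
    have h2 : G a ≤ G b := hGmono hab
    have h3 : |G b - G a| = G b - G a := abs_of_nonneg (by linarith)
    rw [h3, abs_le] at h1
    simp only
    linarith [h1.2]
  set M₁ : StieltjesFunction ℝ :=
    ⟨fun t => G t + F t, hM1mono,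
      fun x => ((hGcont.add hFcont).continuousAt).continuousWithinAt⟩ with hM₁def
  set M₂ : StieltjesFunction ℝ :=
    ⟨fun t => G t - F t, hM2mono,
      fun x => ((hGcont.sub hFcont).continuousAt).continuousWithinAt⟩ with hM₂def
  set μ₁ := M₁.measure with hμ₁def
  set μ₂ := M₂.measure with hμ₂def
  -- measurable version of g₀
  obtain ⟨g₁, hg₁m, hg₁ae⟩ : ∃ g₁ : ℝ → ℝ, Measurable g₁ ∧ g₀ =ᵐ[volume] g₁ := by
    obtain ⟨g₁, hm, hae'⟩ := hg₀int.aestronglyMeasurable.aemeasurable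
    exact ⟨g₁, hm, hae'⟩
  set ν := volume.withDensity (fun t => ENNReal.ofReal (2 * g₁ t)) with hνdef
  have hν_Ioc : ∀ a b : ℝ, a ≤ b → ν (Ioc a b) = ENNReal.ofReal (2 * G b - 2 * G a) := by
    intro a b hab
    rw [hνdef, withDensity_apply _ measurableSet_Ioc]
    have hcong : (fun t => ENNReal.ofReal (2 * g₁ t))
        =ᵐ[volume.restrict (Ioc a b)] (fun t => ENNReal.ofReal (2 * g₀ t)) := by
      filter_upwards [ae_restrict_of_ae hg₁ae] with x hx
      rw [hx]
    rw [lintegral_congr_ae hcong]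
    have hint : Integrable (fun t => 2 * g₀ t) (volume.restrict (Ioc a b)) :=
      (hg₀int.const_mul 2).restrict
    rw [← MeasureTheory.ofReal_integral_eq_lintegral_ofReal hint
      (Filter.Eventually.of_forall (fun x => by simp only [Pi.zero_apply]; have := hg₀0 x; linarith))]
    congr 1
    have : ∫ t in Ioc a b, 2 * g₀ t = ∫ t in a..b, 2 * g₀ t := by
      rw [intervalIntegral.integral_of_le hab]
    rw [this, intervalIntegral.integral_const_mul]
    rw [← hGsub a b]
    ring
  have hM1nonneg : ∀ a b : ℝ, a ≤ b → 0 ≤ M₁ b - M₁ a :=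
    fun a b hab => sub_nonneg.mpr (hM1mono hab)
  have hM2nonneg : ∀ a b : ℝ, a ≤ b → 0 ≤ M₂ b - M₂ a :=
    fun a b hab => sub_nonneg.mpr (hM2mono hab)
  -- the sum of the two Stieltjes measures is ν
  have hsum : μ₁ + μ₂ = ν := by
    refine Measure.ext_of_Ioc' (μ₁ + μ₂) ν (fun a b hab => ?_) (fun a b hab => ?_)
    · rw [Measure.add_apply, M₁.measure_Ioc, M₂.measure_Ioc]
      exact ENNReal.add_ne_top.mpr ⟨ENNReal.ofReal_ne_top, ENNReal.ofReal_ne_top⟩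
    · rw [Measure.add_apply, M₁.measure_Ioc, M₂.measure_Ioc,
        ← ENNReal.ofReal_add (hM1nonneg a b hab.le) (hM2nonneg a b hab.le),
        hν_Ioc a b hab.le]
      congr 1
      show (G b + F b) - (G a + F a) + ((G b - F b) - (G a - F a)) = 2 * G b - 2 * G a
      ring
  have hν_ac : ν ≪ volume := withDensity_absolutelyContinuous _ _
  have hle1 : μ₁ ≤ ν := by rw [← hsum]; exact Measure.le_add_right le_rfl
  have hle2 : μ₂ ≤ ν := by rw [← hsum]; exact Measure.le_add_left le_rfl
  have hac1 : μ₁ ≪ volume := (Measure.absolutelyContinuous_of_le hle1).trans hν_ac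
  have hac2 : μ₂ ≪ volume := (Measure.absolutelyContinuous_of_le hle2).trans hν_ac
  set ρ₁ := μ₁.rnDeriv volume with hρ₁def
  set ρ₂ := μ₂.rnDeriv volume with hρ₂def
  have hρsum : (fun t => ρ₁ t + ρ₂ t) =ᵐ[volume] fun t => ENNReal.ofReal (2 * g₀ t) := by
    have h1 := Measure.rnDeriv_add' μ₁ μ₂ volume
    rw [hsum] at h1
    have h2 : ν.rnDeriv volume =ᵐ[volume] fun t => ENNReal.ofReal (2 * g₁ t) :=
      Measure.rnDeriv_withDensity volume ((hg₁m.const_mul 2).ennreal_ofReal)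
    filter_upwards [h1, h2, hg₁ae] with t ht1 ht2 ht3
    have : ρ₁ t + ρ₂ t = ν.rnDeriv volume t := (ht1.symm : _)
    rw [this, ht2, ht3]
  set ρ₁r : ℝ → ℝ := fun t => (ρ₁ t).toReal with hρ₁rdef
  set ρ₂r : ℝ → ℝ := fun t => (ρ₂ t).toReal with hρ₂rdef
  set f' : ℝ → ℝ := fun t => (ρ₁r t - ρ₂r t) / 2 with hf'def
  -- pointwise a.e. bound |f'| ≤ g₀
  have hbound : ∀ᵐ t ∂volume, |f' t| ≤ g₀ t := by
    filter_upwards [hρsum, Measure.rnDeriv_lt_top μ₁ volume,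
      Measure.rnDeriv_lt_top μ₂ volume] with t htsum ht1 ht2
    have hsum' : ρ₁r t + ρ₂r t = 2 * g₀ t := by
      have := congrArg ENNReal.toReal htsum
      rw [ENNReal.toReal_add ht1.ne ht2.ne, ENNReal.toReal_ofReal (by have := hg₀0 t; linarith)] at this
      exact this
    have h1 : 0 ≤ ρ₁r t := ENNReal.toReal_nonneg
    have h2 : 0 ≤ ρ₂r t := ENNReal.toReal_nonneg
    have habs : |ρ₁r t - ρ₂r t| ≤ 2 * g₀ t := by
      rw [abs_le]; constructor <;> linarith
    rw [hf'def]
    simp only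
    rw [abs_div, abs_two]
    linarith [habs]
  -- measurability of f'
  have hf'meas : Measurable f' := by
    apply Measurable.div_const
    exact ((Measure.measurable_rnDeriv μ₁ volume).ennreal_toReal).sub
      ((Measure.measurable_rnDeriv μ₂ volume).ennreal_toReal)
  refine ⟨F, f', ?_, ?_, ?_, ?_⟩
  · -- F = f a.e.
    filter_upwards [hS_ae] with t ht
    exact hFf t ht
  · -- FTC
    intro s hs t ht hst
    have hIoc1 : μ₁ (Ioc s t) = ∫⁻ r in Ioc s t, ρ₁ r ∂volume := by
      conv_lhs => rw [← Measure.withDensity_rnDeriv_eq μ₁ volume hac1]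
      rw [withDensity_apply _ measurableSet_Ioc]
    have hIoc2 : μ₂ (Ioc s t) = ∫⁻ r in Ioc s t, ρ₂ r ∂volume := by
      conv_lhs => rw [← Measure.withDensity_rnDeriv_eq μ₂ volume hac2]
      rw [withDensity_apply _ measurableSet_Ioc]
    have hfin1 : (∫⁻ r in Ioc s t, ρ₁ r ∂volume) ≠ ⊤ := by
      rw [← hIoc1, M₁.measure_Ioc]; exact ENNReal.ofReal_ne_top
    have hfin2 : (∫⁻ r in Ioc s t, ρ₂ r ∂volume) ≠ ⊤ := by
      rw [← hIoc2, M₂.measure_Ioc]; exact ENNReal.ofReal_ne_top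
    have hint1 : IntegrableOn ρ₁r (Ioc s t) volume :=
      integrable_toReal_of_lintegral_ne_top
        ((Measure.measurable_rnDeriv μ₁ volume).aemeasurable) hfin1
    have hint2 : IntegrableOn ρ₂r (Ioc s t) volume :=
      integrable_toReal_of_lintegral_ne_top
        ((Measure.measurable_rnDeriv μ₂ volume).aemeasurable) hfin2
    have hval1 : ∫ r in Ioc s t, ρ₁r r ∂volume = (μ₁ (Ioc s t)).toReal := by
      rw [hIoc1]
      exact integral_toReal ((Measure.measurable_rnDeriv μ₁ volume).aemeasurable.restrict)
        (ae_restrict_of_ae (Measure.rnDeriv_lt_top μ₁ volume))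
    have hval2 : ∫ r in Ioc s t, ρ₂r r ∂volume = (μ₂ (Ioc s t)).toReal := by
      rw [hIoc2]
      exact integral_toReal ((Measure.measurable_rnDeriv μ₂ volume).aemeasurable.restrict)
        (ae_restrict_of_ae (Measure.rnDeriv_lt_top μ₂ volume))
    have e1 : (μ₁ (Ioc s t)).toReal = (G t + F t) - (G s + F s) := by
      rw [hμ₁def, M₁.measure_Ioc, ENNReal.toReal_ofReal (hM1nonneg s t hst)]
    have e2 : (μ₂ (Ioc s t)).toReal = (G t - F t) - (G s - F s) := by
      rw [hμ₂def, M₂.measure_Ioc, ENNReal.toReal_ofReal (hM2nonneg s t hst)]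
    have hii : ∫ r in s..t, f' r = ∫ r in Ioc s t, f' r ∂volume :=
      intervalIntegral.integral_of_le hst
    have hsplit : ∫ r in Ioc s t, f' r ∂volume
        = ((∫ r in Ioc s t, ρ₁r r ∂volume) - ∫ r in Ioc s t, ρ₂r r ∂volume) / 2 := by
      rw [hf'def]
      simp only
      rw [integral_div, integral_sub hint1 hint2]
    rw [hii, hsplit, hval1, hval2, e1, e2]
    ring
  · -- Memℒp
    refine hgq.of_le hf'meas.aestronglyMeasurable ?_
    filter_upwards [ae_restrict_of_ae hbound, ae_restrict_mem hIm] with t ht1 ht2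
    rw [Real.norm_eq_abs, Real.norm_eq_abs, abs_of_nonneg (hg0 t)]
    rwa [hg₀def, Set.indicator_of_mem ht2] at ht1
  · -- a.e. bound
    filter_upwards [ae_restrict_of_ae hbound, ae_restrict_mem hIm] with t ht1 ht2
    rwa [hg₀def, Set.indicator_of_mem ht2] at ht1
end

section
/- Let (X,d) be a metric space, f:X→ℝ Lipschitz, p∈(1,∞), and for t>0 define Q_t f(x) = inf_{y∈X} [f(y) + d(x,y)^p/(p t^{p−1})]. Define D^+(x,t) as the supremum over minimizing sequences (y_n) of F(t,x,·)=f(·)+d(x,·)^p/(p t^{p−1}) of limsup_n d(x,y_n), and D^−(x,t) as the infimum over minimizing sequences of liminf_n d(x,y_n), with D^±(x,0)=0. Then for all x∈X and 0 ≤ t < s one has D^+(x,t) ≤ D^−(x,s); consequently D^+(x,·) and D^−(x,·) are nondecreasing and coincide except at most countably many t∈[0,∞). -/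
open Filter Set
open scoped ENNReal NNReal Topology

variable {X : Type*}

/- The Hopf-Lax integrand `F(t,x,y) = f(y) + d(x,y)^p / (p t^(p-1))`. -/
noncomputable def HLF [MetricSpace X] (f : X → ℝ) (p t : ℝ) (x y : X) : ℝ :=
  f y + dist x y ^ p / (p * t ^ (p - 1))

/- `y : ℕ → X` is a minimizing sequence of `F(t,x,·)`. -/
def IsMinSeq [MetricSpace X] (f : X → ℝ) (p t : ℝ) (x : X) (y : ℕ → X) : Prop :=
  Tendsto (fun n => HLF f p t x (y n)) atTop (nhds (⨅ z, HLF f p t x z))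

/- `D^+(x,t)`: the supremum, over minimizing sequences, of `limsup_n d(x, y_n)`;
`D^+(x,0) = 0`. -/
noncomputable def Dplus [MetricSpace X] (f : X → ℝ) (p : ℝ) (x : X) (t : ℝ) : ℝ :=
  if t = 0 then 0 else
    sSup {L | ∃ y : ℕ → X, IsMinSeq f p t x y ∧
      L = limsup (fun n => dist x (y n)) atTop}

/- `D^-(x,t)`: the infimum, over minimizing sequences, of `liminf_n d(x, y_n)`;
`D^-(x,0) = 0`. -/
noncomputable def Dminus [MetricSpace X] (f : X → ℝ) (p : ℝ) (x : X) (t : ℝ) : ℝ :=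
  if t = 0 then 0 else
    sInf {L | ∃ y : ℕ → X, IsMinSeq f p t x y ∧
      L = liminf (fun n => dist x (y n)) atTop}

/- The Hopf-Lax semigroup `Q_t f(x)`, with `Q_0 f = f`. -/
noncomputable def QHL [MetricSpace X] (f : X → ℝ) (p t : ℝ) (x : X) : ℝ :=
  if t = 0 then f x else ⨅ y, HLF f p t x y

section Aux

variable [MetricSpace X] {f : X → ℝ} {K : ℝ≥0} {p : ℝ} {x : X}

private lemma hlf_self (hp : 1 < p) (t : ℝ) : HLF f p t x x = f x := by
  simp [HLF, Real.zero_rpow (by linarith : p ≠ 0)]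

private lemma hlf_mulinv {t : ℝ} (y : X) :
    HLF f p t x y = f y + dist x y ^ p * (p * t ^ (p - 1))⁻¹ := by
  rw [HLF, div_eq_mul_inv]

/-- The main quantitative bound: a radius `R` such that `HLF` is bounded below by
`f x - K * R` and every almost-minimizer lies within distance `R` of `x`. -/
private lemma hlf_bound (hf : LipschitzWith K f) (hp : 1 < p) {t : ℝ} (ht : 0 < t) :
    ∃ R : ℝ, 1 ≤ R ∧ (∀ y : X, f x - K * R ≤ HLF f p t x y) ∧
      (∀ y : X, HLF f p t x y ≤ f x + 1 → dist x y ≤ R) := by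
  set c : ℝ := (p * t ^ (p - 1))⁻¹ with hc_def
  have htp : (0:ℝ) < t ^ (p - 1) := Real.rpow_pos_of_pos ht _
  have hp0 : (0:ℝ) < p := by linarith
  have hc : 0 < c := by positivity
  set R : ℝ := max 1 ((((K:ℝ) + 2) / c) ^ (p - 1)⁻¹) with hR_def
  have hR1 : (1:ℝ) ≤ R := le_max_left _ _
  have hKR : 0 ≤ (K:ℝ) * R := mul_nonneg K.coe_nonneg (by linarith)
  have key : ∀ d : ℝ, R ≤ d → ((K:ℝ) + 2) * d ≤ c * d ^ p := by
    intro d hd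
    have hd1 : (1:ℝ) ≤ d := le_trans hR1 hd
    have hd0 : (0:ℝ) < d := lt_of_lt_of_le one_pos hd1
    have h1 : ((K:ℝ) + 2) / c ≤ d ^ (p - 1) := by
      calc ((K:ℝ) + 2) / c = ((((K:ℝ) + 2) / c) ^ (p - 1)⁻¹) ^ (p - 1) := by
            rw [Real.rpow_inv_rpow (by positivity) (by linarith : p - 1 ≠ 0)]
        _ ≤ R ^ (p - 1) :=
            Real.rpow_le_rpow (by positivity) (le_max_right _ _) (by linarith)
        _ ≤ d ^ (p - 1) := Real.rpow_le_rpow (by linarith) hd (by linarith)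
    have h2 : d ^ p = d ^ (p - 1) * d := by
      have h3 := Real.rpow_add hd0 (p - 1) 1
      rw [Real.rpow_one] at h3
      rw [← h3]
      norm_num
    calc ((K:ℝ) + 2) * d = c * (((K:ℝ) + 2) / c * d) := by field_simp
      _ ≤ c * (d ^ (p - 1) * d) :=
          mul_le_mul_of_nonneg_left (mul_le_mul_of_nonneg_right h1 hd0.le) hc.le
      _ = c * d ^ p := by rw [h2]
  have hlip : ∀ y : X, f x - (K:ℝ) * dist x y ≤ f y := by
    intro y
    have h1 := hf.dist_le_mul x y
    rw [Real.dist_eq] at h1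
    have h2 := (abs_le.mp h1).2
    linarith
  refine ⟨R, hR1, ?_, ?_⟩
  · intro y
    rw [hlf_mulinv, ← hc_def]
    have hd0 : (0:ℝ) ≤ dist x y := dist_nonneg
    have hdp : (0:ℝ) ≤ dist x y ^ p := Real.rpow_nonneg hd0 _
    rcases le_or_gt (dist x y) R with h | h
    · have h3 := hlip y
      have h4 : (K:ℝ) * dist x y ≤ (K:ℝ) * R :=
        mul_le_mul_of_nonneg_left h K.coe_nonneg
      nlinarith [mul_nonneg hc.le hdp]
    · have hk := key _ h.le
      have h3 := hlip y
      nlinarith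
  · intro y hy
    by_contra h
    push_neg at h
    have hk := key _ h.le
    rw [hlf_mulinv, ← hc_def] at hy
    have h3 := hlip y
    have hd1 : (1:ℝ) ≤ dist x y := le_trans hR1 h.le
    nlinarith

private lemma hlf_bddBelow (hf : LipschitzWith K f) (hp : 1 < p) {t : ℝ} (ht : 0 < t) :
    BddBelow (Set.range (HLF f p t x)) := by
  obtain ⟨R, -, hlow, -⟩ := hlf_bound hf hp ht
  exact ⟨f x - K * R, by rintro v ⟨y, rfl⟩; exact hlow y⟩

private lemma hlf_iInf_le (hf : LipschitzWith K f) (hp : 1 < p) {t : ℝ} (ht : 0 < t) :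
    (⨅ z, HLF f p t x z) ≤ f x := by
  have h := ciInf_le (hlf_bddBelow (f := f) (x := x) hf hp ht) x
  rwa [hlf_self hp] at h

private lemma exists_minSeq (hf : LipschitzWith K f) (hp : 1 < p) {t : ℝ} (ht : 0 < t) :
    ∃ y : ℕ → X, IsMinSeq f p t x y := by
  have : Nonempty X := ⟨x⟩
  obtain ⟨u, -, hu, hmem⟩ :=
    exists_seq_tendsto_sInf (Set.range_nonempty (HLF f p t x)) (hlf_bddBelow hf hp ht)
  choose y hy using hmem
  refine ⟨y, ?_⟩
  have h1 : (⨅ z, HLF f p t x z) = sInf (Set.range (HLF f p t x)) := rfl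
  have h2 : (fun n => HLF f p t x (y n)) = u := funext hy
  rw [IsMinSeq, h1, h2]
  exact hu

private lemma minSeq_bound (hf : LipschitzWith K f) (hp : 1 < p) {t : ℝ} (ht : 0 < t)
    {y : ℕ → X} (hy : IsMinSeq f p t x y) {R : ℝ}
    (hR : ∀ z : X, HLF f p t x z ≤ f x + 1 → dist x z ≤ R) :
    ∀ᶠ n in atTop, dist x (y n) ≤ R := by
  have h1 : ∀ᶠ n in atTop, HLF f p t x (y n) < (⨅ z, HLF f p t x z) + 1 :=
    hy.eventually_lt_const (by linarith)
  filter_upwards [h1] with n hn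
  have h2 := hlf_iInf_le (x := x) hf hp ht
  exact hR _ (by linarith)

/-- The core monotonicity inequality: for `0 < t < s`, any minimizing sequence at time `t`
has `limsup` of distances at most the `liminf` of distances of any minimizing sequence at
time `s`. -/
private lemma core_ineq (hf : LipschitzWith K f) (hp : 1 < p) {t s : ℝ} (ht : 0 < t)
    (hts : t < s) {y z : ℕ → X} (hy : IsMinSeq f p t x y) (hz : IsMinSeq f p s x z) :
    limsup (fun n => dist x (y n)) atTop ≤ liminf (fun n => dist x (z n)) atTop := by
  have hs : 0 < s := lt_trans ht hts
  obtain ⟨Rt, hRt1, hlow_t, hup_t⟩ := hlf_bound (x := x) hf hp ht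
  obtain ⟨Rs, hRs1, hlow_s, hup_s⟩ := hlf_bound (x := x) hf hp hs
  have hbz : ∀ᶠ n in atTop, dist x (z n) ≤ Rs := minSeq_bound hf hp hs hz hup_s
  have cobdd_a : IsCoboundedUnder (· ≤ ·) atTop (fun n => dist x (y n)) :=
    isCoboundedUnder_le_of_le _ (fun n => dist_nonneg)
  have cobdd_b : IsCoboundedUnder (· ≥ ·) atTop (fun n => dist x (z n)) :=
    isCoboundedUnder_ge_of_eventually_le _ hbz
  by_contra hcon
  push_neg at hcon
  obtain ⟨q, hq1, hq2⟩ := exists_between hcon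
  obtain ⟨r, hr1, hr2⟩ := exists_between hq1
  have hliminf0 : (0:ℝ) ≤ liminf (fun n => dist x (z n)) atTop :=
    le_liminf_of_le cobdd_b (Eventually.of_forall fun n => dist_nonneg)
  have hr0 : (0:ℝ) ≤ r := le_trans hliminf0 hr1.le
  have hq0 : (0:ℝ) < q := lt_of_le_of_lt hr0 hr2
  -- the two constants
  set ct : ℝ := (p * t ^ (p - 1))⁻¹ with hct_def
  set cs : ℝ := (p * s ^ (p - 1))⁻¹ with hcs_def
  have htp : (0:ℝ) < t ^ (p - 1) := Real.rpow_pos_of_pos ht _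
  have hsp : (0:ℝ) < s ^ (p - 1) := Real.rpow_pos_of_pos hs _
  have hp0 : (0:ℝ) < p := by linarith
  have hpow : t ^ (p - 1) < s ^ (p - 1) := Real.rpow_lt_rpow ht.le hts (by linarith)
  have hcc : cs < ct := by
    rw [hct_def, hcs_def]
    apply inv_strictAnti₀ (by positivity)
    nlinarith
  have hqr : r ^ p < q ^ p := Real.rpow_lt_rpow hr0 hr2 hp0
  have hccpos : (0:ℝ) < ct - cs := sub_pos.mpr hcc
  have hqrpos : (0:ℝ) < q ^ p - r ^ p := sub_pos.mpr hqr
  set θ : ℝ := (ct - cs) * (q ^ p - r ^ p) / 2 with hθ_def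
  have hθpos : 0 < θ := by positivity
  -- pick a good index `m` for the `s`-sequence
  have hfreq_b : ∃ᶠ m in atTop, dist x (z m) < r := frequently_lt_of_liminf_lt cobdd_b hr1
  have hev_b : ∀ᶠ m in atTop, HLF f p s x (z m) < (⨅ w, HLF f p s x w) + θ :=
    hz.eventually_lt_const (by linarith)
  obtain ⟨m, hbm, hηm⟩ := (hfreq_b.and_eventually hev_b).exists
  -- pick a good index `n` for the `t`-sequence
  have hfreq_a : ∃ᶠ n in atTop, q < dist x (y n) := frequently_lt_of_lt_limsup cobdd_a hq2
  have hev_a : ∀ᶠ n in atTop, HLF f p t x (y n) < (⨅ w, HLF f p t x w) + θ :=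
    hy.eventually_lt_const (by linarith)
  obtain ⟨n, han, hδn⟩ := (hfreq_a.and_eventually hev_a).exists
  -- the comparison inequalities
  have hIt : (⨅ w, HLF f p t x w) ≤ HLF f p t x (z m) :=
    ciInf_le (hlf_bddBelow hf hp ht) _
  have hIs : (⨅ w, HLF f p s x w) ≤ HLF f p s x (y n) :=
    ciInf_le (hlf_bddBelow hf hp hs) _
  rw [hlf_mulinv, ← hct_def] at hδn
  rw [hlf_mulinv, ← hcs_def] at hηm
  rw [hlf_mulinv (t := t), ← hct_def] at hIt
  rw [hlf_mulinv (t := s), ← hcs_def] at hIs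
  set A : ℝ := dist x (y n) ^ p with hA_def
  set B : ℝ := dist x (z m) ^ p with hB_def
  have hAq : q ^ p < A := Real.rpow_lt_rpow hq0.le han hp0
  have hBr : B < r ^ p := Real.rpow_lt_rpow dist_nonneg hbm hp0
  -- combine
  have hsum : A * ct + B * cs < B * ct + A * cs + (ct - cs) * (q ^ p - r ^ p) := by
    have e1 : f (y n) + A * ct < (⨅ w, HLF f p t x w) + θ := hδn
    have e2 : f (z m) + B * cs < (⨅ w, HLF f p s x w) + θ := hηm
    have e3 : (⨅ w, HLF f p t x w) ≤ f (z m) + B * ct := hIt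
    have e4 : (⨅ w, HLF f p s x w) ≤ f (y n) + A * cs := hIs
    rw [hθ_def] at e1 e2
    linarith
  nlinarith [mul_lt_mul_of_pos_left (by linarith : q ^ p - r ^ p < A - B) hccpos]

private lemma dm_le_dp (hf : LipschitzWith K f) (hp : 1 < p) {t : ℝ} (ht : 0 < t) :
    Dminus f p x t ≤ Dplus f p x t := by
  obtain ⟨R, hR1, hlow, hup⟩ := hlf_bound (x := x) hf hp ht
  obtain ⟨y, hy⟩ := exists_minSeq (x := x) hf hp ht
  have hby : ∀ᶠ n in atTop, dist x (y n) ≤ R := minSeq_bound hf hp ht hy hup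
  have hT0 : ∀ M ∈ {L | ∃ w : ℕ → X, IsMinSeq f p t x w ∧
      L = liminf (fun n => dist x (w n)) atTop}, (0:ℝ) ≤ M := by
    rintro M ⟨w, hw, rfl⟩
    have hbw : ∀ᶠ n in atTop, dist x (w n) ≤ R := minSeq_bound hf hp ht hw hup
    exact le_liminf_of_le (isCoboundedUnder_ge_of_eventually_le _ hbw)
      (Eventually.of_forall fun n => dist_nonneg)
  have hSR : ∀ L ∈ {L | ∃ w : ℕ → X, IsMinSeq f p t x w ∧
      L = limsup (fun n => dist x (w n)) atTop}, L ≤ R := by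
    rintro L ⟨w, hw, rfl⟩
    exact limsup_le_of_le (isCoboundedUnder_le_of_le _ fun n => dist_nonneg)
      (minSeq_bound hf hp ht hw hup)
  rw [Dminus, Dplus, if_neg ht.ne', if_neg ht.ne']
  calc sInf {L | ∃ w : ℕ → X, IsMinSeq f p t x w ∧
          L = liminf (fun n => dist x (w n)) atTop}
      ≤ liminf (fun n => dist x (y n)) atTop := csInf_le ⟨0, hT0⟩ ⟨y, hy, rfl⟩
    _ ≤ limsup (fun n => dist x (y n)) atTop :=
        liminf_le_limsup (isBoundedUnder_of_eventually_le hby)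
          (isBoundedUnder_of_eventually_ge (Eventually.of_forall fun n => dist_nonneg))
    _ ≤ sSup {L | ∃ w : ℕ → X, IsMinSeq f p t x w ∧
          L = limsup (fun n => dist x (w n)) atTop} := le_csSup ⟨R, hSR⟩ ⟨y, hy, rfl⟩

private lemma dp_le_dm (hf : LipschitzWith K f) (hp : 1 < p) {t s : ℝ} (ht : 0 ≤ t)
    (hts : t < s) : Dplus f p x t ≤ Dminus f p x s := by
  have hs : 0 < s := lt_of_le_of_lt ht hts
  obtain ⟨Rs, hRs1, hlow_s, hup_s⟩ := hlf_bound (x := x) hf hp hs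
  obtain ⟨zs, hzs⟩ := exists_minSeq (x := x) hf hp hs
  have hTne : Set.Nonempty {L | ∃ w : ℕ → X, IsMinSeq f p s x w ∧
      L = liminf (fun n => dist x (w n)) atTop} := ⟨_, zs, hzs, rfl⟩
  have hT0 : ∀ M ∈ {L | ∃ w : ℕ → X, IsMinSeq f p s x w ∧
      L = liminf (fun n => dist x (w n)) atTop}, (0:ℝ) ≤ M := by
    rintro M ⟨w, hw, rfl⟩
    have hbw : ∀ᶠ n in atTop, dist x (w n) ≤ Rs := minSeq_bound hf hp hs hw hup_s
    exact le_liminf_of_le (isCoboundedUnder_ge_of_eventually_le _ hbw)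
      (Eventually.of_forall fun n => dist_nonneg)
  rcases eq_or_lt_of_le ht with rfl | ht0
  · rw [Dplus, if_pos rfl, Dminus, if_neg hs.ne']
    exact le_csInf hTne hT0
  · rw [Dplus, if_neg ht0.ne', Dminus, if_neg hs.ne']
    obtain ⟨yt, hyt⟩ := exists_minSeq (x := x) hf hp ht0
    refine csSup_le ⟨_, yt, hyt, rfl⟩ ?_
    rintro L ⟨w, hw, rfl⟩
    apply le_csInf hTne
    rintro M ⟨v, hv, rfl⟩
    exact core_ineq hf hp ht0 hts hw hv

end Aux

/- **Statement 1** (Monotonicity of `D^±`). For a Lipschitz `f` and `p ∈ (1,∞)`: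
`D^+(x,t) ≤ D^-(x,s)` for `0 ≤ t < s`; consequently both `D^+(x,·)` and `D^-(x,·)`
are nondecreasing on `[0,∞)`, and they coincide off a countable set. -/
theorem stmt1 [MetricSpace X] (f : X → ℝ) (K : ℝ≥0) (hf : LipschitzWith K f)
    (p : ℝ) (hp : 1 < p) (x : X) :
    (∀ t s : ℝ, 0 ≤ t → t < s → Dplus f p x t ≤ Dminus f p x s) ∧
    MonotoneOn (Dplus f p x) (Ici 0) ∧ MonotoneOn (Dminus f p x) (Ici 0) ∧
    Set.Countable {t ∈ Ici (0:ℝ) | Dplus f p x t ≠ Dminus f p x t} := by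
  have hdm_le_dp : ∀ t : ℝ, 0 ≤ t → Dminus f p x t ≤ Dplus f p x t := by
    intro t ht
    rcases eq_or_lt_of_le ht with rfl | ht0
    · rw [Dplus, Dminus, if_pos rfl, if_pos rfl]
    · exact dm_le_dp hf hp ht0
  have hmain : ∀ t s : ℝ, 0 ≤ t → t < s → Dplus f p x t ≤ Dminus f p x s :=
    fun t s ht hts => dp_le_dm hf hp ht hts
  refine ⟨hmain, ?_, ?_, ?_⟩
  · -- MonotoneOn Dplus
    intro t ht s hs hts
    rcases eq_or_lt_of_le hts with rfl | h
    · exact le_refl _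
    · exact le_trans (hmain t s ht h) (hdm_le_dp s hs)
  · -- MonotoneOn Dminus
    intro t ht s hs hts
    rcases eq_or_lt_of_le hts with rfl | h
    · exact le_refl _
    · exact le_trans (hdm_le_dp t ht) (hmain t s ht h)
  · -- countability
    set bad := {t ∈ Ici (0:ℝ) | Dplus f p x t ≠ Dminus f p x t} with hbad_def
    have hlt : ∀ t ∈ bad, Dminus f p x t < Dplus f p x t := by
      rintro t ⟨ht, hne⟩
      exact lt_of_le_of_ne (hdm_le_dp t ht) (Ne.symm hne)
    have hchoice : ∀ t ∈ bad, ∃ q : ℚ, Dminus f p x t < (q:ℝ) ∧ (q:ℝ) < Dplus f p x t :=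
      fun t ht => exists_rat_btwn (hlt t ht)
    choose! g hg1 hg2 using hchoice
    have hinj : Set.InjOn g bad := by
      intro t htb t' htb' hgt
      by_contra hne
      rcases lt_or_gt_of_ne hne with h | h
      · have h1 : (g t : ℝ) < Dplus f p x t := hg2 t htb
        have h2 : Dplus f p x t ≤ Dminus f p x t' := hmain t t' htb.1 h
        have h3 : Dminus f p x t' < (g t' : ℝ) := hg1 t' htb'
        rw [hgt] at h1
        linarith
      · have h1 : (g t' : ℝ) < Dplus f p x t' := hg2 t' htb'
        have h2 : Dplus f p x t' ≤ Dminus f p x t := hmain t' t htb'.1 h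
        have h3 : Dminus f p x t < (g t : ℝ) := hg1 t htb
        rw [hgt] at h3
        linarith
    exact (Set.mapsTo_univ g bad).countable_of_injOn hinj (Set.countable_univ)
end

section
/- Let (X,d) be a metric space, f:X→ℝ Lipschitz, p∈(1,∞). For every x∈X and t>0, the asymptotic Lipschitz constant of Q_t f at x satisfies Lip_a(Q_t f, x) ≤ [D^+(x,t)/t]^{p−1}. In particular, Lip(Q_t f) ≤ p·Lip(f). -/
open Filter Set
open scoped ENNReal NNReal Topology

variable {X : Type*}

/- The Lipschitz constant of `g` on a set `E`, valued in `ℝ≥0∞`. -/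
noncomputable def eLipOn [MetricSpace X] (g : X → ℝ) (E : Set X) : ℝ≥0∞ :=
  ⨆ x ∈ E, ⨆ y ∈ E, edist (g x) (g y) / edist x y

/- The asymptotic Lipschitz constant `Lip_a(g,x) = inf_{r>0} Lip(g, B(x,r))`. -/
noncomputable def ALC [MetricSpace X] (g : X → ℝ) (x : X) : ℝ≥0∞ :=
  ⨅ r ∈ Ioi (0:ℝ), eLipOn g (Metric.ball x r)

private lemma tangent_le {p : ℝ} (hp : 1 < p) {c s : ℝ} (hc : 0 ≤ c) (hs : 0 ≤ s) :
    c ^ p + p * c ^ (p - 1) * (s - c) ≤ s ^ p := by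
  have hp1 : (0:ℝ) ≤ p - 1 := by linarith
  set g : ℝ → ℝ := fun u => u ^ p - p * c ^ (p - 1) * u with hg
  have hder : ∀ u : ℝ, HasDerivAt g (p * u ^ (p - 1) - p * c ^ (p - 1)) u := by
    intro u
    have h1 : HasDerivAt (fun u : ℝ => u ^ p) (p * u ^ (p - 1)) u :=
      Real.hasDerivAt_rpow_const (Or.inr hp.le)
    exact (h1.sub ((hasDerivAt_id' (x := u)).const_mul (p * c ^ (p - 1)))).congr_deriv (by ring)
  have hcont : Continuous g := continuous_iff_continuousAt.mpr fun u => (hder u).continuousAt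
  have hgs : g c ≤ g s := by
    rcases le_total c s with hcs | hcs
    · have hmono : MonotoneOn g (Ici c) := by
        apply monotoneOn_of_deriv_nonneg (convex_Ici c) hcont.continuousOn
          (fun u _ => (hder u).differentiableAt.differentiableWithinAt)
        intro u hu
        rw [interior_Ici] at hu
        rw [(hder u).deriv]
        have h2 : c ^ (p-1) ≤ u ^ (p-1) := Real.rpow_le_rpow hc (le_of_lt hu) hp1
        nlinarith
      exact hmono self_mem_Ici hcs hcs
    · have hanti : AntitoneOn g (Icc 0 c) := by
        apply antitoneOn_of_deriv_nonpos (convex_Icc 0 c) hcont.continuousOn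
          (fun u _ => (hder u).differentiableAt.differentiableWithinAt)
        intro u hu
        rw [interior_Icc] at hu
        rw [(hder u).deriv]
        have h2 : u ^ (p-1) ≤ c ^ (p-1) := Real.rpow_le_rpow hu.1.le hu.2.le hp1
        nlinarith
      exact hanti ⟨hs, hcs⟩ (right_mem_Icc.mpr hc) hcs
  simp only [hg] at hgs
  nlinarith [hgs]

private lemma rpow_diff_le {p : ℝ} (hp : 1 < p) {a b : ℝ} (ha : 0 ≤ a) (hb : 0 ≤ b) :
    a ^ p - b ^ p ≤ p * a ^ (p - 1) * (a - b) := by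
  nlinarith [tangent_le hp ha hb]


private noncomputable def MM (K : ℝ≥0) (p t : ℝ) : ℝ :=
  max 1 ((p * t ^ (p - 1) * (K + 1)) ^ (p - 1)⁻¹)

private lemma one_le_MM {K : ℝ≥0} {p t : ℝ} : 1 ≤ MM K p t := le_max_left _ _

section basic
variable [MetricSpace X] {f : X → ℝ} {K : ℝ≥0} {p t : ℝ}

private lemma lip_sub (hf : LipschitzWith K f) (x y : X) : f x - K * dist x y ≤ f y := by
  have h : |f x - f y| ≤ K * dist x y := by
    simpa [Real.dist_eq] using hf.dist_le_mul x y
  linarith [(abs_le.mp h).2]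

private lemma HLF_lower (hf : LipschitzWith K f) (hp : 1 < p) (ht : 0 < t) (x y : X) :
    f x - (p - 1) * K * (t * (p * K) ^ (p - 1)⁻¹) ≤ HLF f p t x y := by
  have hT : (0:ℝ) < t ^ (p - 1) := Real.rpow_pos_of_pos ht _
  have hp0 : (0:ℝ) < p := by linarith
  have hpK : (0:ℝ) ≤ p * K := by positivity
  set T := t ^ (p - 1) with hTdef
  set A := t * (p * K) ^ (p - 1)⁻¹ with hAdef
  have hA : 0 ≤ A := by positivity
  have hp1ne : p - 1 ≠ 0 := sub_ne_zero_of_ne hp.ne'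
  have hApow : A ^ (p - 1) = T * (p * K) := by
    rw [hAdef, Real.mul_rpow ht.le (Real.rpow_nonneg hpK _), ← Real.rpow_mul hpK,
      inv_mul_cancel₀ hp1ne, Real.rpow_one]
  have hAp : A ^ p = A * (T * (p * K)) := by
    have h1 : A ^ p = A ^ (1 + (p - 1)) := by norm_num
    rw [h1, Real.rpow_add' hA (by simpa using hp0.ne'), Real.rpow_one, hApow]
  set d := dist x y with hddef
  have hd : 0 ≤ d := dist_nonneg
  have hkey : A ^ p + p * A ^ (p - 1) * (d - A) ≤ d ^ p := tangent_le hp hA hd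
  have hfxy : f x - K * d ≤ f y := lip_sub hf x y
  have hpT : (0:ℝ) < p * T := by positivity
  have h3 : (K:ℝ) * A + p * K * (d - A) ≤ d ^ p / (p * T) := by
    rw [le_div_iff₀ hpT]
    calc ((K:ℝ) * A + p * K * (d - A)) * (p * T)
        = A ^ p + p * A ^ (p - 1) * (d - A) := by rw [hAp, hApow]; ring
      _ ≤ d ^ p := hkey
  have hK0 : (0:ℝ) ≤ K := K.coe_nonneg
  have h4 : (0:ℝ) ≤ (p - 1) * K * d := mul_nonneg (mul_nonneg (by linarith) K.coe_nonneg) hd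
  show f x - (p - 1) * K * A ≤ f y + d ^ p / (p * T)
  nlinarith [h3, hfxy, h4]

private lemma bddBelow_HLF (hf : LipschitzWith K f) (hp : 1 < p) (ht : 0 < t) (x : X) :
    BddBelow (range (HLF f p t x)) :=
  ⟨f x - (p - 1) * K * (t * (p * K) ^ (p - 1)⁻¹), by
    rintro _ ⟨y, rfl⟩; exact HLF_lower hf hp ht x y⟩

private lemma iInf_le_self_f (hf : LipschitzWith K f) (hp : 1 < p) (ht : 0 < t) (x : X) :
    (⨅ y, HLF f p t x y) ≤ f x := by
  have h := ciInf_le (bddBelow_HLF hf hp ht x) x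
  have hp0 : p ≠ 0 := by positivity
  refine h.trans (le_of_eq ?_); simp [HLF, Real.zero_rpow hp0]

private lemma exists_near (hf : LipschitzWith K f) (hp : 1 < p) (ht : 0 < t) (x : X)
    {ε : ℝ} (hε : 0 < ε) : ∃ y, HLF f p t x y ≤ (⨅ z, HLF f p t x z) + ε := by
  haveI : Nonempty X := ⟨x⟩
  obtain ⟨y, hy⟩ := exists_lt_of_ciInf_lt (lt_add_of_pos_right (⨅ z, HLF f p t x z) hε)
  exact ⟨y, hy.le⟩

private lemma dist_le_MM (hf : LipschitzWith K f) (hp : 1 < p) (ht : 0 < t) {x y : X}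
    (h : HLF f p t x y ≤ f x + 1) : dist x y ≤ MM K p t := by
  have hT : (0:ℝ) < t ^ (p - 1) := Real.rpow_pos_of_pos ht _
  set T := t ^ (p - 1) with hTdef
  set d := dist x y with hddef
  rcases le_total d 1 with hd | hd
  · exact hd.trans one_le_MM
  · have hd0 : (0:ℝ) < d := lt_of_lt_of_le one_pos hd
    have hp1ne : p - 1 ≠ 0 := sub_ne_zero_of_ne hp.ne'
    have hp1 : (0:ℝ) ≤ p - 1 := by linarith
    have hfxy : f x - K * d ≤ f y := lip_sub hf x y
    have hpT : (0:ℝ) < p * T := by positivity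
    have hHLF : f y + d ^ p / (p * T) ≤ f x + 1 := h
    have h1 : d ^ p / (p * T) ≤ ((K:ℝ) + 1) * d := by
      have h2 : d ^ p / (p * T) ≤ (K:ℝ) * d + 1 := by linarith
      nlinarith [K.coe_nonneg]
    have hdp : d ^ p = d ^ (p - 1) * d := by
      have : d ^ p = d ^ ((p - 1) + 1) := by norm_num
      rw [this, Real.rpow_add' hd0.le (by simpa using (by positivity : (0:ℝ) < p).ne'),
        Real.rpow_one]
    have h2 : d ^ (p - 1) ≤ p * T * ((K:ℝ) + 1) := by
      rw [div_le_iff₀ hpT, hdp] at h1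
      have := (mul_le_mul_iff_of_pos_right hd0).mp (by linarith [h1] : d ^ (p-1) * d ≤ p * T * ((K:ℝ)+1) * d)
      exact this
    have h3 : d ≤ (p * T * ((K:ℝ) + 1)) ^ (p - 1)⁻¹ := by
      have h4 := Real.rpow_le_rpow (Real.rpow_nonneg hd0.le _) h2 (inv_nonneg.mpr hp1)
      rwa [← Real.rpow_mul hd0.le, mul_inv_cancel₀ hp1ne, Real.rpow_one] at h4
    exact h3.trans (le_max_right _ _)

private lemma HLF_sub_le (hp : 1 < p) (ht : 0 < t) (x x' y : X) :
    HLF f p t x y - HLF f p t x' y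
      ≤ (dist x' y + dist x x') ^ (p - 1) / t ^ (p - 1) * dist x x' := by
  have hT : (0:ℝ) < t ^ (p - 1) := Real.rpow_pos_of_pos ht _
  have hp0 : (0:ℝ) < p := by linarith
  set a := dist x y with hadef
  set b := dist x' y with hbdef
  set d := dist x x' with hddef
  have htri : a ≤ b + d := by
    rw [hadef, hbdef, hddef]
    linarith [dist_triangle x x' y]
  have h1 : a ^ p - b ^ p ≤ p * (b + d) ^ (p - 1) * d := by
    calc a ^ p - b ^ p ≤ p * a ^ (p - 1) * (a - b) := rpow_diff_le hp dist_nonneg dist_nonneg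
      _ ≤ p * a ^ (p - 1) * d := by
          apply mul_le_mul_of_nonneg_left (by linarith) (by positivity)
      _ ≤ p * (b + d) ^ (p - 1) * d := by
          have h2 : a ^ (p - 1) ≤ (b + d) ^ (p - 1) :=
            Real.rpow_le_rpow dist_nonneg htri (by linarith)
          exact mul_le_mul_of_nonneg_right
            (mul_le_mul_of_nonneg_left h2 hp0.le) dist_nonneg
  have hexp : HLF f p t x y - HLF f p t x' y = (a ^ p - b ^ p) / (p * t ^ (p - 1)) := by
    simp only [HLF]; ring
  rw [hexp]
  have hpT : (0:ℝ) < p * t ^ (p - 1) := by positivity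
  calc (a ^ p - b ^ p) / (p * t ^ (p - 1))
      ≤ (p * (b + d) ^ (p - 1) * d) / (p * t ^ (p - 1)) := by
        exact (div_le_div_iff_of_pos_right hpT).mpr h1
    _ = (b + d) ^ (p - 1) / t ^ (p - 1) * d := by
        field_simp


private lemma iInf_le_iInf_add (hf : LipschitzWith K f) (hp : 1 < p) (ht : 0 < t) (x x'' : X) :
    (⨅ y, HLF f p t x'' y) ≤ (⨅ y, HLF f p t x y)
      + (MM K p t + dist x x'') ^ (p - 1) / t ^ (p - 1) * dist x x'' := by
  have hT : (0:ℝ) < t ^ (p - 1) := Real.rpow_pos_of_pos ht _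
  apply le_of_forall_pos_le_add
  intro ε hε
  obtain ⟨y, hy⟩ := exists_near hf hp ht x (lt_min hε one_pos)
  have hyf : HLF f p t x y ≤ f x + 1 := by
    have h1 := iInf_le_self_f hf hp ht x
    have h2 := min_le_right ε 1
    linarith
  have hdM : dist x y ≤ MM K p t := dist_le_MM hf hp ht hyf
  have h2 : (⨅ z, HLF f p t x'' z) ≤ HLF f p t x'' y := ciInf_le (bddBelow_HLF hf hp ht x'') y
  have h3 := HLF_sub_le (f := f) hp ht x'' x y
  have h4 : (dist x y + dist x'' x) ^ (p - 1) / t ^ (p - 1) * dist x'' x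
      ≤ (MM K p t + dist x x'') ^ (p - 1) / t ^ (p - 1) * dist x x'' := by
    rw [dist_comm x'' x]
    have hb : (dist x y + dist x x'') ^ (p - 1) ≤ (MM K p t + dist x x'') ^ (p - 1) :=
      Real.rpow_le_rpow (by positivity) (by linarith [dist_nonneg (x := x) (y := x'')])
        (by linarith)
    exact mul_le_mul_of_nonneg_right ((div_le_div_iff_of_pos_right hT).mpr hb) dist_nonneg
  have h5 := min_le_left ε 1
  linarith


private lemma exists_isMinSeq (hf : LipschitzWith K f) (hp : 1 < p) (ht : 0 < t) (x : X) :
    ∃ y : ℕ → X, IsMinSeq f p t x y := by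
  have H : ∀ n : ℕ, ∃ y, HLF f p t x y ≤ (⨅ z, HLF f p t x z) + 1 / (n + 1) :=
    fun n => exists_near hf hp ht x (by positivity)
  choose y hy using H
  refine ⟨y, ?_⟩
  have h1 : Tendsto (fun n : ℕ => (⨅ z, HLF f p t x z) + 1 / ((n : ℝ) + 1)) atTop
      (𝓝 ((⨅ z, HLF f p t x z) + 0)) :=
    tendsto_const_nhds.add tendsto_one_div_add_atTop_nhds_zero_nat
  rw [add_zero] at h1
  exact tendsto_of_tendsto_of_tendsto_of_le_of_le tendsto_const_nhds h1
    (fun n => ciInf_le (bddBelow_HLF hf hp ht x) (y n)) hy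

private lemma minseq_eventually_le (hf : LipschitzWith K f) (hp : 1 < p) (ht : 0 < t)
    {x : X} {y : ℕ → X} (hy : IsMinSeq f p t x y) :
    ∀ᶠ n in atTop, dist x (y n) ≤ MM K p t := by
  have h1 : ∀ᶠ n in atTop, HLF f p t x (y n) ≤ (⨅ z, HLF f p t x z) + 1 :=
    hy.eventually_le_const (lt_add_of_pos_right _ one_pos)
  filter_upwards [h1] with n hn
  exact dist_le_MM hf hp ht (hn.trans (by linarith [iInf_le_self_f hf hp ht x]))

private lemma Dset_bddAbove (hf : LipschitzWith K f) (hp : 1 < p) (ht : 0 < t) (x : X) :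
    BddAbove {L | ∃ y : ℕ → X, IsMinSeq f p t x y ∧
      L = limsup (fun n => dist x (y n)) atTop} := by
  refine ⟨MM K p t, ?_⟩
  rintro L ⟨y, hy, rfl⟩
  exact limsup_le_of_le (isCoboundedUnder_le_of_le atTop fun n => dist_nonneg)
    (minseq_eventually_le hf hp ht hy)

private lemma limsup_mem_le_Dplus (hf : LipschitzWith K f) (hp : 1 < p) (ht : 0 < t)
    {x : X} {y : ℕ → X} (hy : IsMinSeq f p t x y) :
    limsup (fun n => dist x (y n)) atTop ≤ Dplus f p x t := by
  rw [Dplus, if_neg ht.ne']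
  exact le_csSup (Dset_bddAbove hf hp ht x) ⟨y, hy, rfl⟩

private lemma Dplus_nonneg (hf : LipschitzWith K f) (hp : 1 < p) (ht : 0 < t) (x : X) :
    0 ≤ Dplus f p x t := by
  obtain ⟨y, hy⟩ := exists_isMinSeq hf hp ht x
  have hbd : IsBoundedUnder (· ≤ ·) atTop (fun n => dist x (y n)) :=
    ⟨MM K p t, by simpa [eventually_map] using minseq_eventually_le hf hp ht hy⟩
  have h0 : (0:ℝ) ≤ limsup (fun n => dist x (y n)) atTop :=
    le_limsup_of_frequently_le (Frequently.of_forall fun n => dist_nonneg) hbd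
  exact h0.trans (limsup_mem_le_Dplus hf hp ht hy)


private lemma key_usc (hf : LipschitzWith K f) (hp : 1 < p) (ht : 0 < t) (x : X)
    {δ : ℝ} (hδ : 0 < δ) :
    ∃ r > 0, ∀ x'' ∈ Metric.ball x r, ∀ ε > 0, ∃ y,
      HLF f p t x'' y ≤ (⨅ z, HLF f p t x'' z) + ε ∧
      dist x'' y ≤ Dplus f p x t + δ := by
  have hT : (0:ℝ) < t ^ (p - 1) := Real.rpow_pos_of_pos ht _
  by_contra hcon
  push_neg at hcon
  have H : ∀ k : ℕ, ∃ x'', x'' ∈ Metric.ball x (1/((k:ℝ)+1)) ∧ ∃ ε, 0 < ε ∧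
      ∀ y, HLF f p t x'' y ≤ (⨅ z, HLF f p t x'' z) + ε →
        Dplus f p x t + δ < dist x'' y := by
    intro k
    exact hcon (1/((k:ℝ)+1)) (by positivity)
  choose xs hball εs hεs hmin using H
  have hy : ∀ k : ℕ, ∃ y, HLF f p t (xs k) y
      ≤ (⨅ z, HLF f p t (xs k) z) + min (εs k) (1/((k:ℝ)+1)) :=
    fun k => exists_near hf hp ht (xs k) (lt_min (hεs k) (by positivity))
  choose ys hys using hy
  set D := Dplus f p x t with hD
  set M := MM K p t with hMdef
  have hM1 : (1:ℝ) ≤ M := one_le_MM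
  have hk1 : ∀ k : ℕ, 1/((k:ℝ)+1) ≤ 1 := by
    intro k
    rw [div_le_one (by positivity)]
    simp
  have big : ∀ k, D + δ < dist (xs k) (ys k) := fun k =>
    hmin k (ys k) ((hys k).trans (add_le_add le_rfl (min_le_left _ _)))
  have hMk : ∀ k, dist (xs k) (ys k) ≤ M := by
    intro k
    apply dist_le_MM hf hp ht
    have h1 := iInf_le_self_f hf hp ht (xs k)
    have h2 := (min_le_right (εs k) (1/((k:ℝ)+1))).trans (hk1 k)
    linarith [hys k]
  have hdxx : ∀ k, dist x (xs k) ≤ 1/((k:ℝ)+1) := by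
    intro k
    have := Metric.mem_ball.mp (hball k)
    rw [dist_comm]
    exact this.le
  set C := (M + 1) ^ (p - 1) / t ^ (p - 1) with hC
  have hC0 : 0 ≤ C := by positivity
  have hterm : ∀ k : ℕ, ∀ a b : ℝ, 0 ≤ a → a ≤ M → 0 ≤ b → b ≤ 1/((k:ℝ)+1) →
      (a + b) ^ (p - 1) / t ^ (p - 1) * b ≤ C * (1/((k:ℝ)+1)) := by
    intro k a b ha haM hb hbk
    have h1 : (a + b) ^ (p - 1) ≤ (M + 1) ^ (p - 1) :=
      Real.rpow_le_rpow (by linarith) (by linarith [(hbk.trans (hk1 k))]) (by linarith)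
    exact mul_le_mul ((div_le_div_iff_of_pos_right hT).mpr h1) hbk hb hC0
  have upper : ∀ k : ℕ, HLF f p t x (ys k)
      ≤ (⨅ z, HLF f p t x z) + (1 + 2*C) * (1/((k:ℝ)+1)) := by
    intro k
    have h1 := HLF_sub_le (f := f) hp ht x (xs k) (ys k)
    have h2 : (dist (xs k) (ys k) + dist x (xs k)) ^ (p - 1) / t ^ (p - 1) * dist x (xs k)
        ≤ C * (1/((k:ℝ)+1)) :=
      hterm k _ _ dist_nonneg (hMk k) dist_nonneg (hdxx k)
    have h3 := hys k
    have h4 : min (εs k) (1/((k:ℝ)+1)) ≤ 1/((k:ℝ)+1) := min_le_right _ _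
    have h5 := iInf_le_iInf_add hf hp ht x (xs k)
    have h6 : (M + dist x (xs k)) ^ (p - 1) / t ^ (p - 1) * dist x (xs k)
        ≤ C * (1/((k:ℝ)+1)) := by
      have h7 : (M + dist x (xs k)) ^ (p - 1) ≤ (M + 1) ^ (p - 1) :=
        Real.rpow_le_rpow (by positivity) (by linarith [hdxx k, hk1 k]) (by linarith)
      exact mul_le_mul ((div_le_div_iff_of_pos_right hT).mpr h7) (hdxx k) dist_nonneg hC0
    have hpos : (0:ℝ) < 1/((k:ℝ)+1) := by positivity
    nlinarith [h1, h2, h3, h5, h6]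
  have hms : IsMinSeq f p t x ys := by
    have h1 : Tendsto (fun k : ℕ => (⨅ z, HLF f p t x z) + (1 + 2*C) * (1/((k:ℝ)+1)))
        atTop (𝓝 ((⨅ z, HLF f p t x z) + (1 + 2*C) * 0)) :=
      tendsto_const_nhds.add (tendsto_one_div_add_atTop_nhds_zero_nat.const_mul _)
    rw [mul_zero, add_zero] at h1
    exact tendsto_of_tendsto_of_tendsto_of_le_of_le tendsto_const_nhds h1
      (fun k => ciInf_le (bddBelow_HLF hf hp ht x) (ys k)) upper
  have hlim : limsup (fun k => dist x (ys k)) atTop ≤ D := limsup_mem_le_Dplus hf hp ht hms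
  have hev : ∀ᶠ k : ℕ in atTop, 1/((k:ℝ)+1) ≤ δ/2 :=
    tendsto_one_div_add_atTop_nhds_zero_nat.eventually_le_const (half_pos hδ)
  have hfreq : ∀ᶠ k : ℕ in atTop, D + δ/2 ≤ dist x (ys k) := by
    filter_upwards [hev] with k hk
    have h1 := big k
    have h2 := hdxx k
    have h3 : dist (xs k) (ys k) ≤ dist (xs k) x + dist x (ys k) := dist_triangle _ _ _
    rw [dist_comm (xs k) x] at h3
    linarith
  have hbd : IsBoundedUnder (· ≤ ·) atTop (fun k => dist x (ys k)) := by
    refine ⟨1 + M, ?_⟩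
    rw [eventually_map]
    apply Eventually.of_forall
    intro k
    have h1 : dist x (ys k) ≤ dist x (xs k) + dist (xs k) (ys k) := dist_triangle _ _ _
    linarith [hdxx k, hk1 k, hMk k]
  have hge : D + δ/2 ≤ limsup (fun k => dist x (ys k)) atTop :=
    le_limsup_of_frequently_le hfreq.frequently hbd
  linarith


private lemma ball_est (hf : LipschitzWith K f) (hp : 1 < p) (ht : 0 < t) (x : X)
    {δ : ℝ} (hδ : 0 < δ) :
    ∃ r > 0, eLipOn (fun z => ⨅ y, HLF f p t z y) (Metric.ball x r)
      ≤ ENNReal.ofReal ((Dplus f p x t + 3*δ) ^ (p - 1) / t ^ (p - 1)) := by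
  have hT : (0:ℝ) < t ^ (p - 1) := Real.rpow_pos_of_pos ht _
  obtain ⟨r0, hr0, hkey⟩ := key_usc hf hp ht x hδ
  refine ⟨min r0 δ, lt_min hr0 hδ, ?_⟩
  set D := Dplus f p x t with hDdef
  set L := (D + 3*δ) ^ (p - 1) / t ^ (p - 1) with hLdef
  have hD0 : 0 ≤ D := Dplus_nonneg hf hp ht x
  have hL0 : 0 ≤ L := by positivity
  have hpt : ∀ x' ∈ Metric.ball x (min r0 δ), ∀ x'' ∈ Metric.ball x (min r0 δ),
      (⨅ y, HLF f p t x' y) - (⨅ y, HLF f p t x'' y) ≤ L * dist x' x'' := by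
    intro x' h1 x'' h2
    apply sub_le_iff_le_add.mpr
    rw [add_comm]
    apply le_of_forall_pos_le_add
    intro ε hε
    obtain ⟨y, hy1, hy2⟩ := hkey x'' (Metric.ball_subset_ball (min_le_left _ _) h2) ε hε
    have htri := HLF_sub_le (f := f) hp ht x' x'' y
    have hle : (⨅ z, HLF f p t x' z) ≤ HLF f p t x' y := ciInf_le (bddBelow_HLF hf hp ht x') y
    have hd12 : dist x' x'' ≤ 2*δ := by
      have e0 := dist_triangle x' x x''
      have e1 : dist x' x < min r0 δ := Metric.mem_ball.mp h1
      have e2 : dist x x'' < min r0 δ := by rw [dist_comm]; exact Metric.mem_ball.mp h2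
      have e3 := min_le_right r0 δ
      linarith
    have hmon : (dist x'' y + dist x' x'') ^ (p - 1) / t ^ (p - 1) * dist x' x''
        ≤ L * dist x' x'' := by
      apply mul_le_mul_of_nonneg_right _ dist_nonneg
      apply (div_le_div_iff_of_pos_right hT).mpr
      exact Real.rpow_le_rpow (by positivity) (by linarith) (by linarith)
    linarith
  rw [eLipOn]
  apply iSup₂_le; intro a ha; apply iSup₂_le; intro b hb
  rw [edist_dist, edist_dist]
  apply ENNReal.div_le_of_le_mul
  rw [← ENNReal.ofReal_mul hL0]
  apply ENNReal.ofReal_le_ofReal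
  rw [Real.dist_eq]
  have h2 := hpt b hb a ha
  rw [dist_comm b a] at h2
  exact (abs_sub_le_iff.mpr ⟨hpt a ha b hb, h2⟩)

private lemma part1 (hf : LipschitzWith K f) (hp : 1 < p) (ht : 0 < t) (x : X) :
    ALC (QHL f p t) x ≤ ENNReal.ofReal ((Dplus f p x t / t) ^ (p - 1)) := by
  have hT : (0:ℝ) < t ^ (p - 1) := Real.rpow_pos_of_pos ht _
  have hp1 : (0:ℝ) ≤ p - 1 := by linarith
  have hQ : QHL f p t = fun z => ⨅ y, HLF f p t z y := by
    funext z; rw [QHL, if_neg ht.ne']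
  rw [hQ]
  set D := Dplus f p x t with hDdef
  have hD0 : 0 ≤ D := Dplus_nonneg hf hp ht x
  have hrw : (D / t) ^ (p - 1) = D ^ (p - 1) / t ^ (p - 1) := Real.div_rpow hD0 ht.le (p - 1)
  rw [hrw]
  have hev : ∀ᶠ δ in 𝓝[>] (0:ℝ), ALC (fun z => ⨅ y, HLF f p t z y) x
      ≤ ENNReal.ofReal ((D + 3*δ) ^ (p - 1) / t ^ (p - 1)) := by
    filter_upwards [self_mem_nhdsWithin] with δ hδ
    obtain ⟨r, hr, hball⟩ := ball_est hf hp ht x (mem_Ioi.mp hδ)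
    refine le_trans ?_ hball
    rw [ALC]
    exact iInf₂_le r (mem_Ioi.mpr hr)
  have hreal : Tendsto (fun δ : ℝ => (D + 3*δ) ^ (p - 1) / t ^ (p - 1)) (𝓝 0)
      (𝓝 (D ^ (p - 1) / t ^ (p - 1))) := by
    have h1 : Tendsto (fun δ : ℝ => D + 3*δ) (𝓝 0) (𝓝 D) := by
      have hc : Continuous (fun δ : ℝ => D + 3*δ) := by fun_prop
      simpa using hc.tendsto 0
    have h2 := (Real.continuousAt_rpow_const D (p - 1) (Or.inr hp1)).tendsto.comp h1
    exact h2.div_const _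
  have hcont : Tendsto (fun δ : ℝ => ENNReal.ofReal ((D + 3*δ) ^ (p - 1) / t ^ (p - 1)))
      (𝓝[>] 0) (𝓝 (ENNReal.ofReal (D ^ (p - 1) / t ^ (p - 1)))) :=
    (ENNReal.continuous_ofReal.tendsto _).comp (hreal.mono_left nhdsWithin_le_nhds)
  exact ge_of_tendsto hcont hev

private lemma part2 (hf : LipschitzWith K f) (hp : 1 < p) (ht : 0 < t) :
    ∃ K' : ℝ≥0, LipschitzWith K' (QHL f p t) ∧ (K' : ℝ) ≤ p * K := by
  have hp0 : (0:ℝ) < p := by linarith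
  have hT : (0:ℝ) < t ^ (p - 1) := Real.rpow_pos_of_pos ht _
  have hpT : (0:ℝ) < p * t ^ (p - 1) := by positivity
  have hcoe : ((p.toNNReal * K : ℝ≥0) : ℝ) = p * K := by
    rw [NNReal.coe_mul, Real.coe_toNNReal p hp0.le]
  have hpK : (0:ℝ) ≤ p * K := by positivity
  have hp1ne : p - 1 ≠ 0 := sub_ne_zero_of_ne hp.ne'
  set T := t ^ (p - 1) with hTdef
  set A := t * (p * K) ^ (p - 1)⁻¹ with hAdef
  have hA0 : 0 ≤ A := by positivity
  have hApow : A ^ (p - 1) = T * (p * K) := by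
    rw [hAdef, Real.mul_rpow ht.le (Real.rpow_nonneg hpK _), ← Real.rpow_mul hpK,
      inv_mul_cancel₀ hp1ne, Real.rpow_one]
  have hAp : A ^ p = A * (T * (p * K)) := by
    have h1 : A ^ p = A ^ (1 + (p - 1)) := by norm_num
    rw [h1, Real.rpow_add' hA0 (by simpa using hp0.ne'), Real.rpow_one, hApow]
  have main : ∀ u v : X, (⨅ y, HLF f p t u y) - (⨅ y, HLF f p t v y)
      ≤ p * K * dist u v := by
    intro u v
    apply sub_le_iff_le_add.mpr
    rw [add_comm]
    apply le_of_forall_pos_le_add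
    intro ε hε
    obtain ⟨y, hy⟩ := exists_near hf hp ht v hε
    set a := dist u y with hadef
    set b := dist v y with hbdef
    set d := dist u v with hddef
    have ha0 : 0 ≤ a := dist_nonneg
    have hb0 : 0 ≤ b := dist_nonneg
    have hd0 : 0 ≤ d := dist_nonneg
    have htri : a ≤ d + b := by
      rw [hadef, hbdef, hddef]; exact dist_triangle u v y
    have hK0 : (0:ℝ) ≤ K := K.coe_nonneg
    rcases le_total a A with haA | haA
    · have h1 : (⨅ z, HLF f p t u z) ≤ HLF f p t u y := ciInf_le (bddBelow_HLF hf hp ht u) y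
      have h2 : HLF f p t u y - HLF f p t v y = (a ^ p - b ^ p) / (p * T) := by
        simp only [HLF]; ring
      have h3 : a ^ p - b ^ p ≤ p * (T * (p * K)) * d := by
        calc a ^ p - b ^ p ≤ p * a ^ (p - 1) * (a - b) := rpow_diff_le hp ha0 hb0
          _ ≤ p * a ^ (p - 1) * d := by
              apply mul_le_mul_of_nonneg_left (by linarith) (by positivity)
          _ ≤ p * (T * (p * K)) * d := by
              apply mul_le_mul_of_nonneg_right _ hd0
              have h4 : a ^ (p - 1) ≤ A ^ (p - 1) := Real.rpow_le_rpow ha0 haA (by linarith)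
              rw [hApow] at h4
              exact mul_le_mul_of_nonneg_left h4 hp0.le
      have h5 : (a ^ p - b ^ p) / (p * T) ≤ p * K * d := by
        rw [div_le_iff₀ hpT]
        calc a ^ p - b ^ p ≤ p * (T * (p * K)) * d := h3
          _ = p * K * d * (p * T) := by ring
      linarith
    · have h1 : (⨅ z, HLF f p t u z) ≤ f u := iInf_le_self_f hf hp ht u
      have h2 : f u ≤ f y + K * a := by linarith [lip_sub hf u y]
      have h4 := tangent_le hp hA0 hb0
      have h5 : (K:ℝ) * A + p * K * (b - A) ≤ b ^ p / (p * T) := by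
        rw [le_div_iff₀ hpT]
        calc ((K:ℝ) * A + p * K * (b - A)) * (p * T)
            = A ^ p + p * A ^ (p - 1) * (b - A) := by rw [hAp, hApow]; ring
          _ ≤ b ^ p := h4
      have h6 : f y + b ^ p / (p * T) ≤ (⨅ z, HLF f p t v z) + ε := hy
      have h7 : (0:ℝ) ≤ (p - 1) * K * (a - A) :=
        mul_nonneg (mul_nonneg (by linarith) hK0) (by linarith)
      nlinarith [h1, h2, h5, h6, h7]
  refine ⟨p.toNNReal * K, ?_, le_of_eq hcoe⟩
  apply LipschitzWith.of_dist_le_mul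
  intro u v
  simp only [QHL, if_neg ht.ne']
  rw [hcoe, Real.dist_eq]
  have h1 := main u v
  have h2 := main v u
  rw [dist_comm v u] at h2
  exact abs_sub_le_iff.mpr ⟨h1, h2⟩

end basic


/- **Statement 4** (Bound on the asymptotic Lipschitz constant of `Q_t f`). For every
`x ∈ X` and `t > 0`, `Lip_a(Q_t f, x) ≤ (D^+(x,t)/t)^(p-1)`; in particular
`Lip(Q_t f) ≤ p Lip(f)`. -/
theorem stmt4 [MetricSpace X] (f : X → ℝ) (K : ℝ≥0) (hf : LipschitzWith K f)
    (p : ℝ) (hp : 1 < p) :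
    (∀ (x : X) (t : ℝ), 0 < t →
      ALC (QHL f p t) x ≤ ENNReal.ofReal ((Dplus f p x t / t) ^ (p - 1))) ∧
    (∀ t : ℝ, 0 < t → ∃ K' : ℝ≥0, LipschitzWith K' (QHL f p t) ∧ (K' : ℝ) ≤ p * K) := by
  exact ⟨fun x t ht => part1 hf hp ht x, fun t ht => part2 hf hp ht⟩
end

section
/- Let (X,d) be a metric space, f:X→ℝ Lipschitz, p∈(1,∞) with dual exponent q. Then for every x∈X the Hamilton–Jacobi subsolution property d/dt Q_t f(x) + (1/q) Lip_a(Q_t f, x)^q ≤ 0 holds for every t∈(0,∞) with at most countably many exceptions. -/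
open Filter Set
open scoped ENNReal NNReal Topology

variable {X : Type*}

lemma aux_div_le' {a b pp : ℝ} (hpp : 0 < pp) (h : a ≤ b) : a / pp ≤ b / pp := by
  gcongr

lemma aux_div_le {a b c pp : ℝ} (hpp : 0 < pp) (h : a ≤ b + pp * c) : a / pp ≤ b / pp + c := by
  have h2 : a / pp ≤ (b + pp * c) / pp := aux_div_le' hpp h
  rw [add_div, mul_div_cancel_left₀ _ (ne_of_gt hpp)] at h2
  exact h2

lemma aux_le_add_all {a b : ℝ} (h : ∀ ε : ℝ, 0 < ε → a ≤ b + ε) : a ≤ b := by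
  by_contra hlt
  push_neg at hlt
  have := h ((a - b)/2) (by linarith)
  linarith

lemma aux_rpow_sub_rpow_le {p : ℝ} (hp : 1 ≤ p) {a b : ℝ} (hb : 0 ≤ b) (hba : b ≤ a) :
    a ^ p - b ^ p ≤ p * a ^ (p - 1) * (a - b) := by
  rcases eq_or_lt_of_le hba with rfl | hlt
  · norm_num
  have hcont : ContinuousOn (fun x : ℝ => x ^ p) (Icc b a) := by
    intro x _
    exact (Real.continuousAt_rpow_const x p (Or.inr (by linarith))).continuousWithinAt
  have hderiv : ∀ x ∈ Ioo b a, HasDerivAt (fun x : ℝ => x ^ p) (p * x ^ (p - 1)) x := fun x _ =>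
    Real.hasDerivAt_rpow_const (Or.inr hp)
  obtain ⟨c, hc, hceq⟩ := exists_hasDerivAt_eq_slope (fun x : ℝ => x ^ p)
    (fun x => p * x ^ (p - 1)) hlt hcont hderiv
  have h1 : a ^ p - b ^ p = p * c ^ (p - 1) * (a - b) := by
    rw [hceq, div_mul_cancel₀ _ (sub_ne_zero.mpr hlt.ne')]
  rw [h1]
  have hc0 : 0 ≤ c := le_trans hb hc.1.le
  have h2 : c ^ (p - 1) ≤ a ^ (p - 1) := Real.rpow_le_rpow hc0 hc.2.le (by linarith)
  have h3 : p * c ^ (p - 1) ≤ p * a ^ (p - 1) := mul_le_mul_of_nonneg_left h2 (by linarith)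
  exact mul_le_mul_of_nonneg_right h3 (sub_nonneg.mpr hba)

lemma aux_convexOn_hasDerivAt (φ : ℝ → ℝ) (hc : ConvexOn ℝ (Ioi (0:ℝ)) φ) :
    ∃ C : Set ℝ, C.Countable ∧ ∀ s ∈ Ioi (0:ℝ), s ∉ C → ∃ m, HasDerivAt φ m s := by
  classical
  have hsec : ∀ s ∈ Ioi (0:ℝ), ∀ u ∈ Ioi (0:ℝ), ∀ v ∈ Ioi (0:ℝ), u ≠ s → v ≠ s → u ≤ v →
      slope φ s u ≤ slope φ s v := by
    intro s hs u hu v hv hus hvs huv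
    have := hc.secant_mono hs hu hv hus hvs huv
    simpa [slope_def_field] using this
  set ld : ℝ → ℝ := fun s => sSup (slope φ s '' Ioo 0 s) with hld
  set rd : ℝ → ℝ := fun s => sInf (slope φ s '' Ioi s) with hrd
  have hne_l : ∀ s ∈ Ioi (0:ℝ), (slope φ s '' Ioo 0 s).Nonempty := by
    intro s hs; exact (nonempty_Ioo.mpr (by exact hs)).image _
  have hne_r : ∀ s ∈ Ioi (0:ℝ), (slope φ s '' Ioi s).Nonempty := by
    intro s hs; exact (nonempty_Ioi (a := s)).image _
  have hbddA : ∀ s ∈ Ioi (0:ℝ), BddAbove (slope φ s '' Ioo 0 s) := by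
    intro s hs
    refine ⟨slope φ s (s + 1), ?_⟩
    rintro _ ⟨u, hu, rfl⟩
    have hs0 : (0:ℝ) < s := hs
    exact hsec s hs u hu.1 (s+1) (show (0:ℝ) < s + 1 from lt_trans hs0 (by linarith)) (ne_of_lt hu.2)
      (by linarith) (by linarith [hu.2])
  have hbddB : ∀ s ∈ Ioi (0:ℝ), BddBelow (slope φ s '' Ioi s) := by
    intro s hs
    refine ⟨slope φ s (s/2), ?_⟩
    rintro _ ⟨v, hv, rfl⟩
    have hs0 : (0:ℝ) < s := hs
    have hv0 : s < v := hv
    exact hsec s hs (s/2) (by simpa using half_pos hs0) v (show (0:ℝ) < v from lt_trans hs0 hv)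
      (by linarith [half_lt_self hs0]) (ne_of_gt hv) (by linarith [half_lt_self hs0, hv0])
  have h_lr : ∀ s ∈ Ioi (0:ℝ), ld s ≤ rd s := by
    intro s hs
    refine csSup_le (hne_l s hs) ?_
    rintro _ ⟨u, hu, rfl⟩
    refine le_csInf (hne_r s hs) ?_
    rintro _ ⟨v, hv, rfl⟩
    exact hsec s hs u hu.1 v (show (0:ℝ) < v from lt_trans (mem_Ioi.mp hs) hv) (ne_of_lt hu.2) (ne_of_gt hv)
      (le_trans hu.2.le hv.le)
  have h_ord : ∀ s1 ∈ Ioi (0:ℝ), ∀ s2 ∈ Ioi (0:ℝ), s1 < s2 → rd s1 ≤ ld s2 := by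
    intro s1 hs1 s2 hs2 h12
    have h1 : rd s1 ≤ slope φ s1 s2 :=
      csInf_le (hbddB s1 hs1) (mem_image_of_mem _ h12)
    have h2 : slope φ s2 s1 ≤ ld s2 :=
      le_csSup (hbddA s2 hs2) (mem_image_of_mem _ ⟨hs1, h12⟩)
    rw [slope_comm] at h2
    exact h1.trans h2
  refine ⟨{s ∈ Ioi (0:ℝ) | ld s < rd s}, ?_, ?_⟩
  · have hsub : {s ∈ Ioi (0:ℝ) | ld s < rd s} ⊆
        ⋃ q : ℚ, {s ∈ Ioi (0:ℝ) | ld s < (q:ℝ) ∧ (q:ℝ) < rd s} := by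
      rintro s ⟨hs, hlt⟩
      obtain ⟨q, hq1, hq2⟩ := exists_rat_btwn hlt
      exact mem_iUnion.mpr ⟨q, hs, hq1, hq2⟩
    refine Set.Countable.mono hsub (countable_iUnion fun q => ?_)
    refine Set.Subsingleton.countable ?_
    rintro s1 ⟨hs1, hq1, hq1'⟩ s2 ⟨hs2, hq2, hq2'⟩
    by_contra hne
    rcases lt_or_gt_of_ne hne with h | h
    · exact absurd (h_ord s1 hs1 s2 hs2 h) (by linarith)
    · exact absurd (h_ord s2 hs2 s1 hs1 h) (by linarith)
  · rintro s hs hsC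
    have heq : ld s = rd s := by
      rcases eq_or_lt_of_le (h_lr s hs) with h | h
      · exact h
      · exact absurd ⟨hs, h⟩ hsC
    refine ⟨ld s, ?_⟩
    rw [hasDerivAt_iff_tendsto_slope, ← nhdsLT_sup_nhdsGT, tendsto_sup]
    constructor
    · have hmono : MonotoneOn (slope φ s) (Ioo 0 s) := by
        intro u hu v hv huv
        exact hsec s hs u hu.1 v hv.1 (ne_of_lt hu.2) (ne_of_lt hv.2) huv
      exact MonotoneOn.tendsto_nhdsWithin_Ioo_left (nonempty_Ioo.mpr hs) hmono (hbddA s hs)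
    · have hmono : MonotoneOn (slope φ s) (Ioi s) := by
        intro u hu v hv huv
        exact hsec s hs u (show (0:ℝ) < u from lt_trans (mem_Ioi.mp hs) hu) v (show (0:ℝ) < v from lt_trans (mem_Ioi.mp hs) hv) (ne_of_gt hu) (ne_of_gt hv) huv
      have := MonotoneOn.tendsto_nhdsGT hmono (hbddB s hs)
      rw [heq]
      exact this


/- **Statement 5** (Subsolution of Hamilton–Jacobi). For every `x ∈ X`, with at most
countably many exceptional times `t ∈ (0,∞)`, the derivative `d/dt Q_t f(x)` exists and
`d/dt Q_t f(x) + (1/q) Lip_a(Q_t f, x)^q ≤ 0`, where `q = p/(p-1)`. -/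
set_option maxHeartbeats 2000000 in
theorem stmt5 [MetricSpace X] (f : X → ℝ) (K : ℝ≥0) (hf : LipschitzWith K f)
    (p q : ℝ) (hp : 1 < p) (hq : 1 / p + 1 / q = 1) (x : X) :
    ∃ N : Set ℝ, N.Countable ∧ ∀ t : ℝ, 0 < t → t ∉ N →
      ∃ d : ℝ, HasDerivAt (fun s => QHL f p s x) d t ∧
        d + (1 / q) * ((ALC (QHL f p t) x).toReal) ^ q ≤ 0 := by
  classical
  haveI : Nonempty X := ⟨x⟩
  have hp0 : (0:ℝ) < p := by linarith
  have hpne : p ≠ 0 := ne_of_gt hp0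
  have hp1 : (0:ℝ) < p - 1 := by linarith
  have hp1ne : p - 1 ≠ 0 := ne_of_gt hp1
  -- q = p/(p-1)
  have hq0 : q ≠ 0 := by
    intro h0
    rw [h0, div_zero, add_zero] at hq
    have : p = 1 := by
      field_simp at hq
      linarith
    linarith
  have hpq : q + p = p * q := by
    field_simp at hq
    linarith
  have hq' : q = p / (p - 1) := by
    field_simp
    nlinarith [hpq]
  have hqpos : 0 < q := by
    rw [hq']; positivity
  -- basic objects
  set K1 : ℝ := (K:ℝ) + 1 with hK1def
  have hK1 : 0 < K1 := by positivity
  have hLip : ∀ v y : X, f v - K1 * dist v y ≤ f y := by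
    intro v y
    have h : |f v - f y| ≤ (K:ℝ) * dist v y := by
      rw [← Real.dist_eq]; exact hf.dist_le_mul v y
    have h2 := (abs_le.mp h).2
    nlinarith [dist_nonneg (x := v) (y := y)]
  set cst : X → X → ℝ := fun v y => dist v y ^ p / p with hcstdef
  have hcst0 : ∀ v y, 0 ≤ cst v y := by
    intro v y
    have : (0:ℝ) ≤ dist v y ^ p := Real.rpow_nonneg dist_nonneg p
    positivity
  have hcstself : ∀ v : X, cst v v = 0 := by
    intro v
    simp only [hcstdef, dist_self, Real.zero_rpow hpne, zero_div]
  -- uniform lower bound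
  have lbd : ∀ s : ℝ, 0 < s → ∀ v y : X,
      f v - K1 * (p * K1 / s) ^ (p-1)⁻¹ ≤ f y + cst v y * s := by
    intro s hs v y
    set R : ℝ := (p * K1 / s) ^ (p-1)⁻¹ with hRdef
    have hR0 : 0 < R := Real.rpow_pos_of_pos (by positivity) _
    have hRp : R ^ (p - 1) = p * K1 / s := by
      rw [hRdef, ← Real.rpow_mul (by positivity), inv_mul_cancel₀ hp1ne, Real.rpow_one]
    set d := dist v y with hddef
    have hd0 : (0:ℝ) ≤ d := dist_nonneg
    by_cases hdR : d ≤ R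
    · have h1 : K1 * d ≤ K1 * R := mul_le_mul_of_nonneg_left hdR hK1.le
      have h2 : 0 ≤ cst v y * s := mul_nonneg (hcst0 v y) hs.le
      have := hLip v y
      simp only [← hddef] at this
      linarith
    · push_neg at hdR
      have hdpos : 0 < d := hR0.trans hdR
      have hkey : K1 * d ≤ cst v y * s := by
        have h1 : d ^ p = d ^ (p-1) * d := by
          conv_lhs => rw [show p = p - 1 + 1 by ring]
          rw [Real.rpow_add hdpos, Real.rpow_one]
        have h2 : R ^ (p-1) ≤ d ^ (p-1) := Real.rpow_le_rpow hR0.le hdR.le hp1.le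
        have h3 : (p * K1 / s) * d ≤ d ^ (p-1) * d := by
          rw [← hRp]
          exact mul_le_mul_of_nonneg_right h2 hd0
        have h4 : cst v y * s = d ^ p * s / p := by
          simp only [hcstdef, ← hddef]
          ring
        rw [h4, h1]
        rw [le_div_iff₀ hp0]
        calc K1 * d * p = (p * K1 / s) * d * s := by field_simp
          _ ≤ d ^ (p-1) * d * s := mul_le_mul_of_nonneg_right h3 hs.le
      have := hLip v y
      simp only [← hddef] at this
      nlinarith [mul_pos hK1 hR0]
  have hbdd : ∀ (v : X) (s : ℝ), 0 < s → BddBelow (range fun y : X => f y + cst v y * s) := by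
    intro v s hs
    refine ⟨f v - K1 * (p * K1 / s) ^ (p-1)⁻¹, ?_⟩
    rintro _ ⟨y, rfl⟩
    exact lbd s hs v y
  have hQle : ∀ (v : X) (s : ℝ), 0 < s → (⨅ y, f y + cst v y * s) ≤ f v := by
    intro v s hs
    have := ciInf_le (hbdd v s hs) v
    simpa [hcstself v] using this
  -- the one-variable function
  set h : ℝ → ℝ := fun s => ⨅ y, f y + cst x y * s with hhdef
  have hmono : ∀ s s' : ℝ, 0 < s → s ≤ s' → h s ≤ h s' := by
    intro s s' hs hss
    refine le_ciInf fun y => ?_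
    refine (ciInf_le (hbdd x s hs) y).trans ?_
    have : cst x y * s ≤ cst x y * s' := mul_le_mul_of_nonneg_left hss (hcst0 x y)
    linarith
  have hconv : ConvexOn ℝ (Ioi (0:ℝ)) (fun s => -h s) := by
    refine ⟨convex_Ioi 0, ?_⟩
    intro s1 hs1 s2 hs2 a b ha hb hab
    have hs1' : (0:ℝ) < s1 := hs1
    have hs2' : (0:ℝ) < s2 := hs2
    have hcomb : 0 < a * s1 + b * s2 := by
      rcases eq_or_lt_of_le ha with rfl | ha'
      · have hb1 : b = 1 := by linarith
        simpa [hb1] using hs2'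
      · have h1 : 0 < a * s1 := mul_pos ha' hs1'
        have h2 : 0 ≤ b * s2 := mul_nonneg hb hs2'.le
        linarith
    simp only [smul_eq_mul]
    have key : a * h s1 + b * h s2 ≤ h (a * s1 + b * s2) := by
      refine le_ciInf fun y => ?_
      have e1 : h s1 ≤ f y + cst x y * s1 := ciInf_le (hbdd x s1 hs1') y
      have e2 : h s2 ≤ f y + cst x y * s2 := ciInf_le (hbdd x s2 hs2') y
      have e3 : a * h s1 + b * h s2 ≤ a * (f y + cst x y * s1) + b * (f y + cst x y * s2) :=
        add_le_add (mul_le_mul_of_nonneg_left e1 ha) (mul_le_mul_of_nonneg_left e2 hb)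
      have e4 : a * (f y + cst x y * s1) + b * (f y + cst x y * s2)
          = (a + b) * f y + cst x y * (a * s1 + b * s2) := by ring
      rw [e4, hab, one_mul] at e3
      exact e3
    linarith
  obtain ⟨C, hCcount, hC⟩ := aux_convexOn_hasDerivAt _ hconv
  -- rewriting QHL
  have hQHL : ∀ u : ℝ, 0 < u → ∀ v : X, QHL f p u v = ⨅ y, f y + cst v y * u ^ (1 - p) := by
    intro u hu v
    rw [QHL, if_neg (ne_of_gt hu)]
    refine iInf_congr fun y => ?_
    rw [HLF]
    have h1 : u ^ ((1:ℝ) - p) = (u ^ (p-1))⁻¹ := by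
      rw [show (1:ℝ) - p = -(p-1) by ring, Real.rpow_neg hu.le]
    rw [h1, hcstdef]
    rw [div_mul_eq_div_div, div_eq_mul_inv (dist v y ^ p / p)]
  refine ⟨(fun s : ℝ => s ^ ((1-p)⁻¹)) '' C, hCcount.image _, ?_⟩
  intro t ht htN
  set s0 : ℝ := t ^ ((1:ℝ) - p) with hs0def
  have hs0 : 0 < s0 := Real.rpow_pos_of_pos ht _
  have h1pne : (1:ℝ) - p ≠ 0 := by intro hcon; linarith [hcon]
  have hs0C : s0 ∉ C := by
    intro hcon
    refine htN ⟨s0, hcon, ?_⟩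
    show s0 ^ ((1:ℝ)-p)⁻¹ = t
    rw [hs0def]
    exact Real.rpow_rpow_inv ht.le h1pne
  obtain ⟨m', hder'⟩ := hC s0 (mem_Ioi.mpr hs0) hs0C
  have hderh : HasDerivAt h (-m') s0 := by
    have := hder'.neg
    have e : (-fun s => -h s) = h := by ext s; simp
    rw [e] at this; exact this
  set m : ℝ := -m' with hmdef
  -- m ≥ 0
  have hm0 : 0 ≤ m := by
    have hts : Tendsto (slope h s0) (𝓝[>] s0) (𝓝 m) :=
      (hasDerivAt_iff_tendsto_slope.mp hderh).mono_left
        (nhdsWithin_mono _ fun u hu => ne_of_gt hu)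
    refine ge_of_tendsto hts ?_
    filter_upwards [eventually_mem_nhdsWithin] with u hu
    have hu' : s0 < u := hu
    have : h s0 ≤ h u := hmono s0 u hs0 hu'.le
    rw [slope_def_field]
    apply div_nonneg <;> linarith
  -- derivative of t ↦ Q_t f x
  have hrp : HasDerivAt (fun u : ℝ => u ^ ((1:ℝ)-p)) ((1-p) * t ^ ((1:ℝ)-p-1)) t :=
    Real.hasDerivAt_rpow_const (Or.inl (ne_of_gt ht))
  have hcomp : HasDerivAt (fun u : ℝ => h (u ^ ((1:ℝ)-p))) (m * ((1-p) * t ^ ((1:ℝ)-p-1))) t := by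
    have := hderh.comp t hrp
    exact this
  have hQeq : (fun u : ℝ => QHL f p u x) =ᶠ[𝓝 t] fun u : ℝ => h (u ^ ((1:ℝ)-p)) := by
    filter_upwards [isOpen_Ioi.eventually_mem (mem_Ioi.mpr ht)] with u hu
    exact hQHL u hu x
  have hQder : HasDerivAt (fun u : ℝ => QHL f p u x) (m * ((1-p) * t ^ ((1:ℝ)-p-1))) t :=
    hcomp.congr_of_eventuallyEq hQeq
  refine ⟨m * ((1-p) * t ^ ((1:ℝ)-p-1)), hQder, ?_⟩
  -- the main estimate
  set D : ℝ := (p * m) ^ p⁻¹ with hDdef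
  have hD0 : 0 ≤ D := Real.rpow_nonneg (by positivity) _
  set L : ℝ := (ALC (QHL f p t) x).toReal with hLdef
  have hL0 : 0 ≤ L := ENNReal.toReal_nonneg
  have hs0t : t ^ ((1:ℝ)-p) = s0 := rfl
  -- Step S1: ∀ δ > 0, L ≤ s0 * (D + δ)^(p-1)
  have S1 : ∀ δ : ℝ, 0 < δ → L ≤ s0 * (D + δ) ^ (p-1) := by
    intro δ hδ
    have hinf0 : (⨅ z : X, f z + cst x z * s0) = h s0 := rfl
    -- choose η with (p(m+2η))^(1/p) < D + δ/4
    have hηex : ∃ η : ℝ, 0 < η ∧ (p*(m+2*η)) ^ p⁻¹ < D + δ/4 := by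
      have h1 : Tendsto (fun η : ℝ => p*(m+2*η)) (𝓝 0) (𝓝 (p*m)) := by
        have hcont : Continuous fun η : ℝ => p*(m+2*η) := by fun_prop
        simpa using hcont.tendsto 0
      have h2 : ContinuousAt (fun z : ℝ => z ^ p⁻¹) (p*m) :=
        Real.continuousAt_rpow_const _ _ (Or.inr (by positivity))
      have h3 : Tendsto (fun η : ℝ => (p*(m+2*η)) ^ p⁻¹) (𝓝[>] 0) (𝓝 D) := by
        rw [hDdef]
        exact (h2.tendsto.comp h1).mono_left nhdsWithin_le_nhds
      have h4 := (h3.eventually_lt_const (show D < D + δ/4 by linarith)).and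
        eventually_mem_nhdsWithin
      obtain ⟨η, hη1, hη2⟩ := h4.exists
      exact ⟨η, hη2, hη1⟩
    obtain ⟨η, hη, hηlt⟩ := hηex
    -- choose s1 < s0 with slope control
    have hslope : Tendsto (slope h s0) (𝓝[<] s0) (𝓝 m) :=
      (hasDerivAt_iff_tendsto_slope.mp hderh).mono_left
        (nhdsWithin_mono _ fun u hu => ne_of_lt hu)
    have hev1 : ∀ᶠ u in 𝓝[<] s0, slope h s0 u < m + η :=
      hslope.eventually_lt_const (by linarith)
    have hev2 : ∀ᶠ u in 𝓝[<] s0, 0 < u :=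
      (isOpen_Ioi.eventually_mem (mem_Ioi.mpr hs0)).filter_mono nhdsWithin_le_nhds
    obtain ⟨s1, ⟨hs1a, hs1b⟩, hs1c⟩ := ((hev1.and hev2).and eventually_mem_nhdsWithin).exists
    have hs1lt : s1 < s0 := hs1c
    have hs01 : 0 < s0 - s1 := by linarith
    have hupper : h s0 - h s1 ≤ (m + η) * (s0 - s1) := by
      have hsl : slope h s0 s1 = (h s0 - h s1) / (s0 - s1) := by
        rw [slope_def_field]
        rw [div_eq_div_iff (by linarith) (by linarith)]
        ring
      rw [hsl] at hs1a
      have := (div_lt_iff₀ hs01).mp hs1a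
      linarith
    set εs : ℝ := η * (s0 - s1) with hεsdef
    have hεs : 0 < εs := mul_pos hη hs01
    -- Claim A : good minimizers at x are within D + δ/4
    have ClaimA : ∀ y : X, f y + cst x y * s0 ≤ h s0 + εs → dist x y < D + δ/4 := by
      intro y hy
      have e1 : h s1 ≤ f y + cst x y * s1 := ciInf_le (hbdd x s1 hs1b) y
      have e0 : cst x y * s1 = cst x y * s0 - cst x y * (s0 - s1) := by ring
      have e2 : cst x y * (s0 - s1) ≤ (h s0 - h s1) + εs := by
        rw [e0] at e1; linarith
      have e3 : cst x y ≤ m + 2*η := by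
        have h5 : cst x y * (s0-s1) ≤ (m+2*η) * (s0-s1) := by
          have : (m + η) * (s0-s1) + η * (s0-s1) = (m + 2*η) * (s0-s1) := by ring
          rw [hεsdef] at e2
          linarith
        exact le_of_mul_le_mul_right h5 hs01
      have e4 : p * cst x y = dist x y ^ p := by
        simp only [hcstdef]
        field_simp
      have e5 : dist x y = (dist x y ^ p) ^ p⁻¹ := (Real.rpow_rpow_inv dist_nonneg hpne).symm
      rw [e5, ← e4]
      calc (p * cst x y) ^ p⁻¹ ≤ (p * (m + 2*η)) ^ p⁻¹ :=
            Real.rpow_le_rpow (by positivity) (mul_le_mul_of_nonneg_left e3 hp0.le)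
              (by positivity)
        _ < D + δ/4 := hηlt
    -- crude bound for near-minimizers
    set B : ℝ := max 1 ((p*(K1+1)/s0) ^ (p-1)⁻¹) with hBdef
    have hB1 : (1:ℝ) ≤ B := le_max_left _ _
    have hB0 : 0 < B := lt_of_lt_of_le one_pos hB1
    have crude : ∀ (v y : X) (ε : ℝ), 0 < ε → ε ≤ 1 →
        f y + cst v y * s0 ≤ (⨅ z : X, f z + cst v z * s0) + ε → dist v y ≤ B := by
      intro v y ε hε hε1 hy
      by_contra hgt
      push_neg at hgt
      set d := dist v y with hddef
      have hd1 : 1 < d := lt_of_le_of_lt hB1 hgt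
      have hdpos : 0 < d := by linarith
      set R1 : ℝ := (p*(K1+1)/s0) ^ (p-1)⁻¹ with hR1def
      have hR1d : R1 < d := lt_of_le_of_lt (le_max_right _ _) hgt
      have hR10 : 0 < R1 := Real.rpow_pos_of_pos (by positivity) _
      have hR1p : R1 ^ (p-1) = p*(K1+1)/s0 := by
        rw [hR1def, ← Real.rpow_mul (by positivity), inv_mul_cancel₀ hp1ne, Real.rpow_one]
      have hup : cst v y * s0 ≤ K1 * d + 1 := by
        have h5 : (⨅ z : X, f z + cst v z * s0) ≤ f v := hQle v s0 hs0
        have h6 := hLip v y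
        rw [← hddef] at h6
        linarith
      have hlow : (K1 + 1) * d ≤ cst v y * s0 := by
        have h1 : d ^ p = d ^ (p-1) * d := by
          conv_lhs => rw [show p = p - 1 + 1 by ring]
          rw [Real.rpow_add hdpos, Real.rpow_one]
        have h2 : R1 ^ (p-1) ≤ d ^ (p-1) := Real.rpow_le_rpow hR10.le hR1d.le hp1.le
        have h3 : (p*(K1+1)/s0) * d ≤ d ^ (p-1) * d := by
          rw [← hR1p]; exact mul_le_mul_of_nonneg_right h2 hdpos.le
        have h4 : cst v y * s0 = d ^ p * s0 / p := by
          simp only [hcstdef, ← hddef]; ring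
        rw [h4, h1, le_div_iff₀ hp0]
        calc (K1+1) * d * p = (p*(K1+1)/s0) * d * s0 := by field_simp
          _ ≤ d ^ (p-1) * d * s0 := mul_le_mul_of_nonneg_right h3 hs0.le
      linarith only [hup, hlow, hd1, hK1]
    -- choose r
    set ε0 : ℝ := min 1 (εs/4) with hε0def
    have hε0 : 0 < ε0 := lt_min one_pos (by linarith)
    have hε0a : ε0 ≤ 1 := min_le_left _ _
    have hε0b : ε0 ≤ εs/4 := min_le_right _ _
    have hrex : ∃ r : ℝ, 0 < r ∧ r < δ/4 ∧ s0 * ((B + r) ^ (p-1) * r) ≤ εs/4 := by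
      have hadd : ContinuousAt (fun r : ℝ => B + r) 0 := by fun_prop
      have hc1 : ContinuousAt (fun z : ℝ => z ^ (p-1)) ((fun r : ℝ => B + r) 0) := by
        simp only [add_zero]
        exact Real.continuousAt_rpow_const _ _ (Or.inl (ne_of_gt hB0))
      have hc2 : ContinuousAt (fun r : ℝ => s0 * ((B + r) ^ (p-1) * r)) 0 :=
        continuousAt_const.mul ((ContinuousAt.comp hc1 hadd).mul continuousAt_id)
      have h1 : Tendsto (fun r : ℝ => s0 * ((B + r) ^ (p-1) * r)) (𝓝[>] 0) (𝓝 0) := by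
        have := hc2.tendsto.mono_left (nhdsWithin_le_nhds (s := Ioi (0:ℝ)))
        simpa using this
      have h2 : ∀ᶠ r in 𝓝[>] (0:ℝ), s0 * ((B + r) ^ (p-1) * r) < εs/4 :=
        h1.eventually_lt_const (by linarith)
      have h3 : Ioo (0:ℝ) (δ/4) ∈ 𝓝[>] (0:ℝ) :=
        Ioo_mem_nhdsGT_of_mem ⟨le_refl 0, by linarith⟩
      obtain ⟨r, hr1, hr2⟩ := (h2.and h3).exists
      exact ⟨r, hr2.1, hr2.2, hr1.le⟩
    obtain ⟨r, hr0, hrδ, hre⟩ := hrex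
    set er : ℝ := s0 * ((B + r) ^ (p-1) * r) with herdef
    have hBr0 : (0:ℝ) ≤ (B + r) ^ (p-1) := Real.rpow_nonneg (by linarith) _
    have her0 : 0 ≤ er := mul_nonneg hs0.le (mul_nonneg hBr0 hr0.le)
    -- transfer of near-minimizers from v to x
    have GoodMin : ∀ v : X, dist x v < r → ∀ (y : X) (ε2 : ℝ), 0 < ε2 → ε2 ≤ ε0 →
        f y + cst v y * s0 ≤ (⨅ z : X, f z + cst v z * s0) + ε2 → dist v y ≤ D + δ/4 + r := by
      intro v hv y ε2 hε2 hε2a hy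
      have hdvy : dist v y ≤ B := crude v y ε2 hε2 (hε2a.trans hε0a) hy
      -- step1 : inf at v is close to inf at x
      have step1 : (⨅ z : X, f z + cst v z * s0) ≤ h s0 + ε0 + er := by
        obtain ⟨y', hy'⟩ := exists_lt_of_ciInf_lt
          (f := fun z : X => f z + cst x z * s0) (a := h s0 + ε0) (by rw [hinf0]; linarith)
        have hd' : dist x y' ≤ B := crude x y' ε0 hε0 hε0a (by rw [hinf0]; exact hy'.le)
        have hvx : dist v x < r := by rw [dist_comm]; exact hv
        have htri : dist v y' ≤ dist x y' + r := by
          have := dist_triangle v x y'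
          linarith
        have hcmp : cst v y' ≤ cst x y' + (B + r) ^ (p-1) * r := by
          have h1 : dist v y' ^ p ≤ (dist x y' + r) ^ p :=
            Real.rpow_le_rpow dist_nonneg htri hp0.le
          have h2 : (dist x y' + r) ^ p - dist x y' ^ p
              ≤ p * (dist x y' + r) ^ (p-1) * r := by
            have := aux_rpow_sub_rpow_le hp.le (dist_nonneg (x := x) (y := y'))
              (show dist x y' ≤ dist x y' + r by linarith)
            simpa using this
          have h3 : (dist x y' + r) ^ (p-1) ≤ (B + r) ^ (p-1) :=
            Real.rpow_le_rpow (by positivity) (by linarith) hp1.le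
          have h4 : dist v y' ^ p ≤ dist x y' ^ p + p * ((B + r) ^ (p-1) * r) := by
            have h3' : p * ((dist x y' + r) ^ (p-1) * r) ≤ p * ((B + r) ^ (p-1) * r) :=
              mul_le_mul_of_nonneg_left (mul_le_mul_of_nonneg_right h3 hr0.le) hp0.le
            linarith only [h1, h2, h3']
          have h5 := aux_div_le hp0 h4
          simpa only [hcstdef] using h5
        have h20 : cst v y' * s0 ≤ (cst x y' + (B+r)^(p-1)*r) * s0 :=
          mul_le_mul_of_nonneg_right hcmp hs0.le
        have h21 : (cst x y' + (B+r)^(p-1)*r) * s0 = cst x y' * s0 + er := by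
          rw [herdef]; ring
        have h22 : (⨅ z : X, f z + cst v z * s0) ≤ f y' + cst v y' * s0 :=
          ciInf_le (hbdd v s0 hs0) y'
        have h23 : f y' + cst x y' * s0 < h s0 + ε0 := hy'
        linarith
      -- y is a good near-minimizer for x
      have hkey : f y + cst x y * s0 ≤ h s0 + εs := by
        have hxv : dist x v < r := hv
        have htri : dist x y ≤ dist v y + r := by
          have := dist_triangle x v y
          linarith
        have hcmp : cst x y ≤ cst v y + (B + r) ^ (p-1) * r := by
          have h1 : dist x y ^ p ≤ (dist v y + r) ^ p :=
            Real.rpow_le_rpow dist_nonneg htri hp0.le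
          have h2 : (dist v y + r) ^ p - dist v y ^ p
              ≤ p * (dist v y + r) ^ (p-1) * r := by
            have := aux_rpow_sub_rpow_le hp.le (dist_nonneg (x := v) (y := y))
              (show dist v y ≤ dist v y + r by linarith)
            simpa using this
          have h3 : (dist v y + r) ^ (p-1) ≤ (B + r) ^ (p-1) :=
            Real.rpow_le_rpow (by positivity) (by linarith) hp1.le
          have h4 : dist x y ^ p ≤ dist v y ^ p + p * ((B + r) ^ (p-1) * r) := by
            have h3' : p * ((dist v y + r) ^ (p-1) * r) ≤ p * ((B + r) ^ (p-1) * r) :=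
              mul_le_mul_of_nonneg_left (mul_le_mul_of_nonneg_right h3 hr0.le) hp0.le
            linarith only [h1, h2, h3']
          have h5 := aux_div_le hp0 h4
          simpa only [hcstdef] using h5
        have h20 : cst x y * s0 ≤ (cst v y + (B+r)^(p-1)*r) * s0 :=
          mul_le_mul_of_nonneg_right hcmp hs0.le
        have h21 : (cst v y + (B+r)^(p-1)*r) * s0 = cst v y * s0 + er := by
          rw [herdef]; ring
        have hεs4 : ε0 + ε2 + 2 * er ≤ εs := by linarith
        linarith
      have := ClaimA y hkey
      have hvx : dist v x < r := by rw [dist_comm]; exact hv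
      have := dist_triangle v x y
      linarith
    -- the Lipschitz estimate on the ball
    have LipEst : ∀ u v : X, dist x u < r → dist x v < r →
        (⨅ z : X, f z + cst u z * s0) - (⨅ z : X, f z + cst v z * s0)
          ≤ s0 * (D + δ) ^ (p-1) * dist u v := by
      intro u v hu hv
      have hDδ0 : (0:ℝ) ≤ (D + δ) ^ (p-1) := Real.rpow_nonneg (by linarith) _
      have hM0' : 0 ≤ s0 * (D + δ) ^ (p-1) * dist u v :=
        mul_nonneg (mul_nonneg hs0.le hDδ0) dist_nonneg
      rw [sub_le_iff_le_add']
      refine aux_le_add_all fun ε' hε' => ?_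
      set ε2 : ℝ := min ε' ε0 with hε2def
      have hε2 : 0 < ε2 := lt_min hε' hε0
      obtain ⟨y, hy⟩ := exists_lt_of_ciInf_lt
        (f := fun z : X => f z + cst v z * s0)
        (a := (⨅ z : X, f z + cst v z * s0) + ε2) (by linarith)
      have hyle : f y + cst v y * s0 ≤ (⨅ z : X, f z + cst v z * s0) + ε2 := hy.le
      have hdvy : dist v y ≤ D + δ/4 + r := GoodMin v hv y ε2 hε2 (min_le_right _ _) hyle
      have hQu : (⨅ z : X, f z + cst u z * s0) ≤ f y + cst u y * s0 :=
        ciInf_le (hbdd u s0 hs0) y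
      have hduv : dist u v < 2*r := by
        have h1 := dist_triangle u x v
        have hux : dist u x < r := by rw [dist_comm]; exact hu
        linarith
      have hε2ε' : ε2 ≤ ε' := min_le_left _ _
      by_cases hcase : dist u y ≤ dist v y
      · have h7 : dist u y ^ p ≤ dist v y ^ p :=
          Real.rpow_le_rpow dist_nonneg hcase hp0.le
        have h8 : cst u y ≤ cst v y := by
          have := aux_div_le' hp0 h7
          simpa only [hcstdef] using this
        have h9 : cst u y * s0 ≤ cst v y * s0 := mul_le_mul_of_nonneg_right h8 hs0.le
        linarith
      · push_neg at hcase
        have ha := dist_triangle u v y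
        have h9 : dist u y ≤ D + δ := by
          have hδr : δ/4 + 3*r ≤ δ := by linarith
          linarith
        have h8 := aux_rpow_sub_rpow_le hp.le (dist_nonneg (x := v) (y := y)) hcase.le
        have h10 : dist u y ^ (p-1) ≤ (D+δ)^(p-1) :=
          Real.rpow_le_rpow dist_nonneg h9 hp1.le
        have h11 : dist u y - dist v y ≤ dist u v := by linarith
        have h12 : dist u y ^ (p-1) * (dist u y - dist v y) ≤ (D+δ)^(p-1) * dist u v :=
          mul_le_mul h10 h11 (by linarith) hDδ0
        have h13 : dist u y ^ p ≤ dist v y ^ p + p * ((D+δ)^(p-1) * dist u v) := by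
          have h12' : p * (dist u y ^ (p-1) * (dist u y - dist v y))
              ≤ p * ((D+δ)^(p-1) * dist u v) := mul_le_mul_of_nonneg_left h12 hp0.le
          linarith only [h8, h12']
        have h14 : cst u y ≤ cst v y + (D+δ)^(p-1) * dist u v := by
          have := aux_div_le hp0 h13
          simpa only [hcstdef] using this
        have h15 : cst u y * s0 ≤ (cst v y + (D+δ)^(p-1) * dist u v) * s0 :=
          mul_le_mul_of_nonneg_right h14 hs0.le
        have h16 : (cst v y + (D+δ)^(p-1) * dist u v) * s0
            = cst v y * s0 + s0 * (D+δ)^(p-1) * dist u v := by ring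
        linarith
    -- conclude via eLipOn and ALC
    set M : ℝ := s0 * (D + δ) ^ (p-1) with hMdef
    have hM0 : 0 ≤ M := mul_nonneg hs0.le (Real.rpow_nonneg (by linarith) _)
    have hQv : ∀ v : X, QHL f p t v = ⨅ z : X, f z + cst v z * s0 := by
      intro v
      rw [hQHL t ht v, ← hs0def]
    have hLip2 : eLipOn (QHL f p t) (Metric.ball x r) ≤ ENNReal.ofReal M := by
      rw [eLipOn]
      refine iSup₂_le fun u hu => iSup₂_le fun v hv => ?_
      have hu' : dist x u < r := by rw [dist_comm]; exact Metric.mem_ball.mp hu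
      have hv' : dist x v < r := by rw [dist_comm]; exact Metric.mem_ball.mp hv
      rcases eq_or_ne u v with rfl | huv
      · simp
      · have he1 : edist u v ≠ 0 := by rwa [ne_eq, edist_eq_zero]
        rw [ENNReal.div_le_iff_le_mul (Or.inl he1) (Or.inl (edist_ne_top u v))]
        rw [edist_dist, edist_dist, ← ENNReal.ofReal_mul hM0]
        apply ENNReal.ofReal_le_ofReal
        rw [Real.dist_eq, abs_sub_le_iff]
        constructor
        · rw [hQv u, hQv v]
          exact LipEst u v hu' hv'
        · rw [hQv u, hQv v, dist_comm u v]
          exact LipEst v u hv' hu'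
    have hALC : ALC (QHL f p t) x ≤ ENNReal.ofReal M := by
      rw [ALC]
      exact le_trans (iInf₂_le r (mem_Ioi.mpr hr0)) hLip2
    exact ENNReal.toReal_le_of_le_ofReal hM0 hALC
  -- Step S2: L ≤ s0 * D^(p-1)
  have S2 : L ≤ s0 * D ^ (p-1) := by
    have hcont : Tendsto (fun δ : ℝ => s0 * (D + δ) ^ (p-1)) (𝓝[>] 0) (𝓝 (s0 * D ^ (p-1))) := by
      have h1 : Tendsto (fun δ : ℝ => D + δ) (𝓝 0) (𝓝 D) := by
        simpa using (continuous_add_left D).tendsto (0:ℝ)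
      have h2 : ContinuousAt (fun z : ℝ => z ^ (p-1)) D :=
        Real.continuousAt_rpow_const D (p-1) (Or.inr hp1.le)
      have h3 : Tendsto (fun δ : ℝ => (D + δ) ^ (p-1)) (𝓝 0) (𝓝 (D ^ (p-1))) :=
        h2.tendsto.comp h1
      exact (tendsto_const_nhds.mul h3).mono_left nhdsWithin_le_nhds
    refine ge_of_tendsto hcont ?_
    filter_upwards [eventually_mem_nhdsWithin] with δ hδ
    exact S1 δ hδ
  -- final arithmetic
  have hDp : D ^ p = p * m := by
    rw [hDdef, Real.rpow_inv_rpow (by positivity) hpne]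
  have hexp1 : (p - 1) * q = p := by
    rw [hq']; field_simp
  have hexp2 : ((1:ℝ) - p) * q = -p := by
    rw [hq']; field_simp; ring
  have hs0q : s0 ^ q = t ^ (-p : ℝ) := by
    rw [hs0def, ← Real.rpow_mul ht.le, hexp2]
  have hLq : L ^ q ≤ t ^ (-p : ℝ) * (p * m) := by
    calc L ^ q ≤ (s0 * D ^ (p-1)) ^ q := Real.rpow_le_rpow hL0 S2 hqpos.le
      _ = s0 ^ q * (D ^ (p-1)) ^ q := Real.mul_rpow hs0.le (Real.rpow_nonneg hD0 _)
      _ = s0 ^ q * D ^ ((p-1) * q) := by rw [← Real.rpow_mul hD0]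
      _ = t ^ (-p : ℝ) * (p * m) := by rw [hs0q, hexp1, hDp]
  have htp0 : (0:ℝ) ≤ t ^ (-p : ℝ) := (Real.rpow_pos_of_pos ht _).le
  have hexp3 : t ^ ((1:ℝ) - p - 1) = t ^ (-p : ℝ) := by
    rw [show (1:ℝ) - p - 1 = -p by ring]
  rw [hexp3]
  have h1 : 1/q * L ^ q ≤ 1/q * (t ^ (-p:ℝ) * (p * m)) := by
    apply mul_le_mul_of_nonneg_left hLq
    positivity
  have h2 : 1/q * (t ^ (-p:ℝ) * (p * m)) = (p-1) * (t ^ (-p:ℝ) * m) := by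
    rw [hq']; field_simp
  have h3 : m * ((1-p) * t ^ (-p:ℝ)) = -((p-1) * (t ^ (-p:ℝ) * m)) := by ring
  have h4 : 1/q * L ^ q ≤ (p-1) * (t ^ (-p:ℝ) * m) := by rw [← h2]; exact h1
  linarith [h3, h4]
end
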